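/- arXiv:2102.11568 — 9 statements merged into one kernel-verified Lean document; each statement's English description precedes it below -/
import Mathlib

section
/- Let 0 < ε < 1 and let φ be a simple martingale on a probability space with filtration {F_n}_{n≥0}, F_0 trivial, whose square function satisfies Sφ ≤ ε almost surely. Then E e^{φ_∞ − φ_0} ≤ e^{−ε}/(1 − ε). -/
open MeasureTheory Filter Finset Real

/-!
With increments `d k = φ (k + 1) - φ k` we have `|d k| ≤ ε` and
`e^{φ_N - φ_0} = ∏ (1 + d k) · e^{∑ (d k - log (1 + d k))}`. Since `x - log (1 + x)` is `x²` times
`∫₀¹ s / (1 + x s) ds`, which decreases in `x`, we get `x - log (1 + x) ≤ (x / ε)² (-ε - log (1 - ε))`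
for `x ≥ -ε`; as `∑ (d k)² ≤ ε²`, the exponential factor is at most `e^{-ε} / (1 - ε)`.
The product `∏ (1 + d k)` is a martingale transform of `φ` starting at `1`, so its expectation is `1`.
-/

lemma one_add_mul_pos {a s : ℝ} (ha : -1 < a) (hs : s ∈ Set.Icc (0 : ℝ) 1) : 0 < 1 + a * s := by
  rcases le_total a 0 with h | h
  · nlinarith [mul_le_mul_of_nonpos_left hs.2 h]
  · nlinarith [mul_nonneg h hs.1]

lemma intervalIntegrable_sq_mul_div_one_add_mul {a : ℝ} (ha : -1 < a) :
    IntervalIntegrable (fun s => a ^ 2 * s / (1 + a * s)) volume 0 1 := by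
  refine (ContinuousOn.div (by fun_prop) (by fun_prop) fun s hs => ?_).intervalIntegrable
  rw [Set.uIcc_of_le zero_le_one] at hs
  exact (one_add_mul_pos ha hs).ne'

lemma sub_log_one_add_eq_integral {a : ℝ} (ha : -1 < a) :
    a - log (1 + a) = ∫ s in (0 : ℝ)..1, a ^ 2 * s / (1 + a * s) := by
  have hderiv : ∀ s ∈ Set.uIcc (0 : ℝ) 1,
      HasDerivAt (fun t => a * t - log (1 + a * t)) (a ^ 2 * s / (1 + a * s)) s := by
    intro s hs
    rw [Set.uIcc_of_le zero_le_one] at hs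
    have hpos := one_add_mul_pos ha hs
    have hlin : HasDerivAt (fun t => a * t) a s := by simpa using (hasDerivAt_id s).const_mul a
    refine (hlin.sub ((hlin.const_add 1).log hpos.ne')).congr_deriv ?_
    field_simp
    ring
  rw [intervalIntegral.integral_eq_sub_of_hasDerivAt hderiv
    (intervalIntegrable_sq_mul_div_one_add_mul ha)]
  simp

lemma sub_log_one_add_le {ε x : ℝ} (hε0 : 0 < ε) (hε1 : ε < 1) (hx : -ε ≤ x) :
    x - log (1 + x) ≤ x ^ 2 / ε ^ 2 * (-ε - log (1 - ε)) := by
  have hε : (-1 : ℝ) < -ε := by linarith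
  have hx1 : (-1 : ℝ) < x := by linarith
  have hεint := sub_log_one_add_eq_integral hε
  have hεi := intervalIntegrable_sq_mul_div_one_add_mul hε
  rw [neg_sq] at hεint hεi
  rw [← sub_eq_add_neg] at hεint
  rw [sub_log_one_add_eq_integral hx1, hεint, ← intervalIntegral.integral_const_mul]
  refine intervalIntegral.integral_mono_on zero_le_one
    (intervalIntegrable_sq_mul_div_one_add_mul hx1) (hεi.const_mul _) fun s hs => ?_
  have hs0 := hs.1
  calc x ^ 2 * s / (1 + x * s) ≤ x ^ 2 * s / (1 + -ε * s) :=
        div_le_div_of_nonneg_left (by positivity) (one_add_mul_pos hε hs) (by nlinarith)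
    _ = x ^ 2 / ε ^ 2 * (ε ^ 2 * s / (1 + -ε * s)) := by field_simp

lemma exp_sum_le_mul_prod_one_add {ι : Type*} (s : Finset ι) (d : ι → ℝ) {ε : ℝ}
    (hε0 : 0 < ε) (hε1 : ε < 1) (hsq : ∑ i ∈ s, d i ^ 2 ≤ ε ^ 2) :
    exp (∑ i ∈ s, d i) ≤ exp (-ε) / (1 - ε) * ∏ i ∈ s, (1 + d i) := by
  have hd : ∀ i ∈ s, -ε ≤ d i := fun i hi => (abs_le.mp (abs_le_of_sq_le_sq
    ((single_le_sum (fun j _ => sq_nonneg (d j)) hi).trans hsq) hε0.le)).1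
  set K := -ε - log (1 - ε)
  have hK : 0 ≤ K := by linarith [log_le_sub_one_of_pos (by linarith : 0 < 1 - ε)]
  have hdefect : ∑ i ∈ s, (d i - log (1 + d i)) ≤ K := calc
    _ ≤ ∑ i ∈ s, d i ^ 2 / ε ^ 2 * K :=
        sum_le_sum fun i hi => sub_log_one_add_le hε0 hε1 (hd i hi)
    _ = (∑ i ∈ s, d i ^ 2) / ε ^ 2 * K := by rw [← sum_mul, ← sum_div]
    _ ≤ K := mul_le_of_le_one_left hK (div_le_one_of_le₀ hsq (by positivity))
  have hprod : exp (∑ i ∈ s, log (1 + d i)) = ∏ i ∈ s, (1 + d i) := by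
    rw [exp_sum]
    exact prod_congr rfl fun i hi => exp_log (by linarith [hd i hi])
  calc exp (∑ i ∈ s, d i)
      = exp (∑ i ∈ s, (d i - log (1 + d i))) * exp (∑ i ∈ s, log (1 + d i)) := by
        rw [← exp_add, ← sum_add_distrib]
        simp only [sub_add_cancel]
    _ ≤ exp K * ∏ i ∈ s, (1 + d i) := by
        rw [hprod]
        gcongr
        exact prod_nonneg fun i hi => by linarith [hd i hi]
    _ = exp (-ε) / (1 - ε) * ∏ i ∈ s, (1 + d i) := by rw [exp_sub, exp_log (by linarith)]

lemma norm_prod_one_add_le {ι : Type*} (s : Finset ι) (d : ι → ℝ) {C : ℝ}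
    (hd : ∀ i ∈ s, |d i| ≤ C) : ‖∏ i ∈ s, (1 + d i)‖ ≤ (1 + C) ^ s.card := by
  rw [norm_prod, ← prod_const]
  exact prod_le_prod (fun i _ => norm_nonneg _) fun i hi =>
    (norm_add_le _ _).trans (by simpa using hd i hi)

namespace MeasureTheory

variable {X : Type*} {m : MeasurableSpace X} {μ : Measure X} {ℱ : Filtration ℕ m}
  {φ : ℕ → X → ℝ}

lemma Martingale.integral_mul_sub_eq_zero [IsFiniteMeasure μ] (hφ : Martingale φ ℱ μ) {n : ℕ}
    {g : X → ℝ} (hg : StronglyMeasurable[ℱ n] g) {C : ℝ} (hgC : ∀ᵐ ω ∂μ, ‖g ω‖ ≤ C) :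
    ∫ ω, g ω * (φ (n + 1) ω - φ n ω) ∂μ = 0 := by
  have hdint : Integrable (φ (n + 1) - φ n) μ := (hφ.integrable _).sub (hφ.integrable _)
  have hcond : μ[φ (n + 1) - φ n | ℱ n] =ᵐ[μ] 0 := by
    filter_upwards [condExp_sub (hφ.integrable (n + 1)) (hφ.integrable n) (ℱ n),
      hφ.condExp_ae_eq n.le_succ] with ω hsub hsucc
    rw [hsub, Pi.sub_apply, hsucc,
      condExp_of_stronglyMeasurable (ℱ.le n) (hφ.stronglyAdapted n) (hφ.integrable n)]
    exact sub_self _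
  calc ∫ ω, g ω * (φ (n + 1) ω - φ n ω) ∂μ
      = ∫ ω, μ[g * (φ (n + 1) - φ n) | ℱ n] ω ∂μ := (integral_condExp (ℱ.le n)).symm
    _ = ∫ ω, (g * μ[φ (n + 1) - φ n | ℱ n]) ω ∂μ := integral_congr_ae <|
        condExp_mul_of_stronglyMeasurable_left hg
          (hdint.bdd_mul (hg.mono (ℱ.le n)).aestronglyMeasurable hgC) hdint
    _ = 0 := integral_eq_zero_of_ae <| by
        filter_upwards [hcond] with ω hω
        simp [hω]

lemma Martingale.stronglyMeasurable_prod_one_add_sub (hφ : Martingale φ ℱ μ) (n : ℕ) :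
    StronglyMeasurable[ℱ n] fun ω => ∏ k ∈ range n, (1 + (φ (k + 1) ω - φ k ω)) := by
  refine Finset.stronglyMeasurable_fun_prod _ fun k hk => stronglyMeasurable_const.add ?_
  have hk : k + 1 ≤ n := mem_range.mp hk
  exact ((hφ.stronglyAdapted (k + 1)).mono (ℱ.mono hk)).sub
    ((hφ.stronglyAdapted k).mono (ℱ.mono (by omega)))

lemma ae_norm_prod_one_add_sub_le {C : ℝ}
    (hC : ∀ᵐ ω ∂μ, ∀ k, |φ (k + 1) ω - φ k ω| ≤ C) (n : ℕ) :
    ∀ᵐ ω ∂μ, ‖∏ k ∈ range n, (1 + (φ (k + 1) ω - φ k ω))‖ ≤ (1 + C) ^ n :=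
  hC.mono fun ω hω => by simpa using norm_prod_one_add_le (range n) _ fun k _ => hω k

lemma Martingale.integrable_prod_one_add_sub [IsFiniteMeasure μ] (hφ : Martingale φ ℱ μ) {C : ℝ}
    (hC : ∀ᵐ ω ∂μ, ∀ k, |φ (k + 1) ω - φ k ω| ≤ C) (n : ℕ) :
    Integrable (fun ω => ∏ k ∈ range n, (1 + (φ (k + 1) ω - φ k ω))) μ :=
  .of_bound ((hφ.stronglyMeasurable_prod_one_add_sub n).mono (ℱ.le n)).aestronglyMeasurable _
    (ae_norm_prod_one_add_sub_le hC n)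

lemma Martingale.integral_prod_one_add_sub [IsProbabilityMeasure μ] (hφ : Martingale φ ℱ μ) {C : ℝ}
    (hC : ∀ᵐ ω ∂μ, ∀ k, |φ (k + 1) ω - φ k ω| ≤ C) (n : ℕ) :
    ∫ ω, ∏ k ∈ range n, (1 + (φ (k + 1) ω - φ k ω)) ∂μ = 1 := by
  induction n with
  | zero => simp
  | succ n ih =>
    have hdint : Integrable (fun ω => φ (n + 1) ω - φ n ω) μ :=
      (hφ.integrable (n + 1)).sub (hφ.integrable n)
    simp_rw [prod_range_succ, mul_one_add]
    rw [integral_add (hφ.integrable_prod_one_add_sub hC n)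
      (hdint.bdd_mul (hφ.integrable_prod_one_add_sub hC n).aestronglyMeasurable
        (ae_norm_prod_one_add_sub_le hC n)),
      ih, hφ.integral_mul_sub_eq_zero (hφ.stronglyMeasurable_prod_one_add_sub n)
        (ae_norm_prod_one_add_sub_le hC n), add_zero]

end MeasureTheory

theorem exponential_moment_estimate_general
    {X : Type*} {m : MeasurableSpace X} {μ : Measure X} [IsProbabilityMeasure μ]
    (ℱ : Filtration ℕ m)
    (φ : ℕ → X → ℝ) (hmart : Martingale φ ℱ μ)
    (N : ℕ) (hsimple : ∀ n, N ≤ n → φ n = φ N)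
    (ε : ℝ) (hε0 : 0 < ε) (hε1 : ε < 1)
    (hS : ∀ᵐ ω ∂μ, Real.sqrt (∑' n, (φ (n + 1) ω - φ n ω) ^ 2) ≤ ε) :
    (∫ ω, Real.exp (φ N ω - φ 0 ω) ∂μ) ≤ Real.exp (-ε) / (1 - ε) := by
  have hsq : ∀ᵐ ω ∂μ, ∀ s : Finset ℕ, ∑ k ∈ s, (φ (k + 1) ω - φ k ω) ^ 2 ≤ ε ^ 2 := by
    filter_upwards [hS] with ω hω s
    have hsum : Summable fun k => (φ (k + 1) ω - φ k ω) ^ 2 :=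
      summable_of_ne_finset_zero (s := range N) fun k hk => by
        rw [mem_range, not_lt] at hk
        simp [hsimple (k + 1) (by omega), hsimple k hk]
    exact (hsum.sum_le_tsum s fun k _ => sq_nonneg _).trans ((sqrt_le_left hε0.le).1 hω)
  have hbdd : ∀ᵐ ω ∂μ, ∀ k, |φ (k + 1) ω - φ k ω| ≤ ε :=
    hsq.mono fun ω hω k => abs_le_of_sq_le_sq (by simpa using hω {k}) hε0.le
  have hpt : ∀ᵐ ω ∂μ, exp (φ N ω - φ 0 ω) ≤
      exp (-ε) / (1 - ε) * ∏ k ∈ range N, (1 + (φ (k + 1) ω - φ k ω)) :=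
    hsq.mono fun ω hω => by
      rw [← sum_range_sub (φ · ω)]
      exact exp_sum_le_mul_prod_one_add _ _ hε0 hε1 (hω _)
  calc ∫ ω, exp (φ N ω - φ 0 ω) ∂μ
      ≤ ∫ ω, exp (-ε) / (1 - ε) * ∏ k ∈ range N, (1 + (φ (k + 1) ω - φ k ω)) ∂μ :=
        integral_mono_of_nonneg (ae_of_all _ fun ω => (exp_pos _).le)
          ((hmart.integrable_prod_one_add_sub hbdd N).const_mul _) hpt
    _ = exp (-ε) / (1 - ε) := by
        rw [integral_const_mul, hmart.integral_prod_one_add_sub hbdd N, mul_one]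

/-- If `0 < ε < 1` and the square function of a simple martingale `φ`
satisfies `Sφ ≤ ε` almost surely, then `E e^{φ_∞ − φ_0} ≤ e^{−ε}/(1 − ε)`. -/
theorem exponential_moment_estimate
    {X : Type*} {m : MeasurableSpace X} {μ : Measure X} [IsProbabilityMeasure μ]
    (ℱ : Filtration ℕ m) (hℱ0 : ℱ 0 = ⊥)
    (φ : ℕ → X → ℝ) (hmart : Martingale φ ℱ μ)
    (N : ℕ) (hsimple : ∀ n, N ≤ n → φ n = φ N)
    (ε : ℝ) (hε0 : 0 < ε) (hε1 : ε < 1)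
    (hS : ∀ᵐ ω ∂μ, Real.sqrt (∑' n, (φ (n + 1) ω - φ n ω) ^ 2) ≤ ε) :
    (∫ ω, Real.exp (φ N ω - φ 0 ω) ∂μ) ≤ Real.exp (-ε) / (1 - ε) :=
  exponential_moment_estimate_general ℱ φ hmart N hsimple ε hε0 hε1 hS
end

section
/- Let φ be a simple martingale on a probability space with filtration {F_n}_{n≥0}, F_0 trivial, whose square function satisfies Sφ ≤ 1 almost surely. Then for every λ > 0 the tail estimate P(φ_∞ − φ_0 ≥ λ) ≤ (e/2)·e^{−λ} holds. Equivalently, by homogeneity, P(φ_∞ − φ_0 ≥ λ) ≤ (e/2)·e^{−λ/‖Sφ‖_{L_∞}} for any simple martingale with ‖Sφ‖_{L_∞} > 0. -/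
/-!
Bellman-function argument. Let `F(z)` be `1` for `z ≤ 0`, the Cantelli bound `1 / (1 + z²)` on
`(0, 1]` and `e^{1-z} / 2` for `z > 1` (the pieces glue to a `C¹` function), and let
`B(x, v) = F(x / √v)`, with `B(x, 0) = 1_{x ≤ 0}`. The scaling `z = x / √v`, `u = h / √v` turns
`B(x - h, v - h²) ≤ B(x, v) - ∂ₓB(x, v) h` (for `h² ≤ v`) into the one-variable inequality
`F((z - u) / √(1 - u²)) ≤ F(z) - u F'(z)`. Applied along the martingale with
`x = λ - (φₙ - φ₀)` and `v = 1 - ∑_{k<n} (φ_{k+1} - φ_k)²`, the linear term is a martingale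
transform with zero mean, so `E B` decreases in `n`. Hence
`P(φ_N - φ₀ ≥ λ) ≤ E B(λ - (φ_N - φ₀), ·) ≤ B(λ, 1) = F(λ) ≤ (e/2) e^{-λ}`.
-/

open MeasureTheory Filter Real

theorem exp_mul_one_sub_add_sub_le_one {q : ℝ} (h₀ : 0 ≤ q) (h₁ : q ≤ 1) :
    exp q * (1 - q + q ^ 2 / 2 - q ^ 3 / 6) ≤ 1 := by
  have h := exp_bound' h₀ h₁ (n := 4) (by norm_num)
  norm_num [Finset.sum_range_succ, Nat.factorial] at h
  have hA : 0 ≤ 1 - q + q ^ 2 / 2 - q ^ 3 / 6 := by nlinarith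
  nlinarith [mul_le_mul_of_nonneg_right h hA, pow_nonneg h₀ 4, pow_nonneg h₀ 6]

theorem exp_sub_sq_div_two_le_one_add {u : ℝ} (h₀ : 0 ≤ u) (h₁ : u ≤ 1) :
    exp (u - u ^ 2 / 2) ≤ 1 + u := by
  have hA : 0 < (1 + u ^ 2 / 2) * (1 - u + u ^ 2 / 2 - u ^ 3 / 6) := by
    have : 0 < 1 - u + u ^ 2 / 2 - u ^ 3 / 6 := by nlinarith
    positivity
  refine le_of_mul_le_mul_right ?_ hA
  calc exp (u - u ^ 2 / 2) * ((1 + u ^ 2 / 2) * (1 - u + u ^ 2 / 2 - u ^ 3 / 6))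
      ≤ exp (u - u ^ 2 / 2) * (exp (u ^ 2 / 2) * (1 - u + u ^ 2 / 2 - u ^ 3 / 6)) := by
        gcongr
        · nlinarith
        · linarith [add_one_le_exp (u ^ 2 / 2)]
    _ = exp u * (1 - u + u ^ 2 / 2 - u ^ 3 / 6) := by rw [← mul_assoc, ← exp_add]; ring_nf
    _ ≤ 1 := exp_mul_one_sub_add_sub_le_one h₀ h₁
    _ ≤ (1 + u) * ((1 + u ^ 2 / 2) * (1 - u + u ^ 2 / 2 - u ^ 3 / 6)) := by
        nlinarith [mul_nonneg (mul_nonneg (pow_nonneg h₀ 3) (sub_nonneg.mpr h₁))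
          (by nlinarith : (0 : ℝ) ≤ 4 - u + u ^ 2)]

-- `y = (1 - u - c) / c` satisfies `(1 + u) (1 + y + y ^ 2 / 2) = 1` exactly.
theorem exp_sub_one_add_div_le_one_add {u c : ℝ} (hc : 0 < c) (hc2 : c ^ 2 = 1 - u ^ 2)
    (hu : u ≤ 0) : exp ((u - 1 + c) / c) ≤ 1 + u := by
  set y := (1 - u - c) / c with hy
  have hyc : y * c = 1 - u - c := div_mul_cancel₀ _ hc.ne'
  have hy0 : 0 ≤ y := div_nonneg (by nlinarith) hc.le
  have hid : (1 + u) * (1 + y + y ^ 2 / 2) = 1 := by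
    have : c ^ 2 * ((1 + u) * (1 + y + y ^ 2 / 2) - 1) = 0 := by
      linear_combination (1 + u) * (c + y * c + 1 - u) / 2 * hyc + (u - 1) / 2 * hc2
    simpa [hc.ne', sub_eq_zero] using this
  have hexp : exp ((u - 1 + c) / c) * exp y = 1 := by
    rw [← exp_add, hy, ← add_div, show u - 1 + c + (1 - u - c) = 0 by ring, zero_div, exp_zero]
  nlinarith [quadratic_le_exp_of_nonneg hy0, exp_pos ((u - 1 + c) / c)]

theorem two_mul_mul_exp_le {q t : ℝ} (hq₀ : 0 < q) (hq₁ : q ≤ 1) (ht : 0 < t)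
    (h : q ^ 2 + 2 * q * t + 2 * t ^ 2 ≤ 2 * t) : 2 * t * exp q ≤ 2 * t + 2 * q * t + q ^ 2 := by
  have hA : 0 < 1 - q + q ^ 2 / 2 - q ^ 3 / 6 := by nlinarith
  refine le_of_mul_le_mul_right ?_ hA
  calc 2 * t * exp q * (1 - q + q ^ 2 / 2 - q ^ 3 / 6)
      = 2 * t * (exp q * (1 - q + q ^ 2 / 2 - q ^ 3 / 6)) := by ring
    _ ≤ 2 * t := by
        nlinarith [exp_mul_one_sub_add_sub_le_one hq₀.le hq₁]
    _ ≤ (2 * t + 2 * q * t + q ^ 2) * (1 - q + q ^ 2 / 2 - q ^ 3 / 6) := by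
        have hAt : 2 * t * (1 / 2 - q / 3 + q ^ 2 / 6) ≤ 1 - q + q ^ 2 / 2 - q ^ 3 / 6 := by
          nlinarith
        nlinarith [sq_nonneg q]

noncomputable def tailProfile (z : ℝ) : ℝ :=
  if z ≤ 0 then 1 else if z ≤ 1 then 1 / (1 + z ^ 2) else exp (1 - z) / 2

noncomputable def tailProfileDeriv (z : ℝ) : ℝ :=
  if z ≤ 0 then 0 else if z ≤ 1 then -(2 * z) / (1 + z ^ 2) ^ 2 else -(exp (1 - z) / 2)

section tailProfile

variable {z : ℝ}

theorem tailProfile_of_nonpos (h : z ≤ 0) : tailProfile z = 1 := if_pos h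

theorem tailProfile_of_pos_of_le_one (h₀ : 0 < z) (h₁ : z ≤ 1) :
    tailProfile z = 1 / (1 + z ^ 2) := by
  rw [tailProfile, if_neg h₀.not_ge, if_pos h₁]

theorem tailProfile_of_one_lt (h : 1 < z) : tailProfile z = exp (1 - z) / 2 := by
  rw [tailProfile, if_neg (by linarith), if_neg h.not_ge]

theorem tailProfileDeriv_of_nonpos (h : z ≤ 0) : tailProfileDeriv z = 0 := if_pos h

theorem tailProfileDeriv_of_pos_of_le_one (h₀ : 0 < z) (h₁ : z ≤ 1) :
    tailProfileDeriv z = -(2 * z) / (1 + z ^ 2) ^ 2 := by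
  rw [tailProfileDeriv, if_neg h₀.not_ge, if_pos h₁]

theorem tailProfileDeriv_of_one_lt (h : 1 < z) : tailProfileDeriv z = -(exp (1 - z) / 2) := by
  rw [tailProfileDeriv, if_neg (by linarith), if_neg h.not_ge]

theorem tailProfile_nonneg (z : ℝ) : 0 ≤ tailProfile z := by
  unfold tailProfile; split_ifs <;> positivity

theorem tailProfile_le_one (z : ℝ) : tailProfile z ≤ 1 := by
  rcases le_or_gt z 0 with h₀ | h₀
  · rw [tailProfile_of_nonpos h₀]
  rcases le_or_gt z 1 with h₁ | h₁
  · rw [tailProfile_of_pos_of_le_one h₀ h₁, div_le_one (by positivity)]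
    nlinarith
  · rw [tailProfile_of_one_lt h₁]
    linarith [exp_le_one_iff.mpr (by linarith : 1 - z ≤ 0)]

theorem tailProfileDeriv_nonpos (z : ℝ) : tailProfileDeriv z ≤ 0 := by
  unfold tailProfileDeriv
  split_ifs with h₀
  · exact le_rfl
  · exact div_nonpos_of_nonpos_of_nonneg (by linarith) (by positivity)
  · linarith [exp_pos (1 - z)]

theorem neg_one_le_tailProfileDeriv (z : ℝ) : -1 ≤ tailProfileDeriv z := by
  rcases le_or_gt z 0 with h₀ | h₀
  · rw [tailProfileDeriv_of_nonpos h₀]; norm_num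
  rcases le_or_gt z 1 with h₁ | h₁
  · rw [tailProfileDeriv_of_pos_of_le_one h₀ h₁, neg_div, neg_le_neg_iff,
      div_le_one (by positivity)]
    nlinarith [sq_nonneg (z - 1)]
  · rw [tailProfileDeriv_of_one_lt h₁]
    linarith [exp_le_one_iff.mpr (by linarith : 1 - z ≤ 0)]

theorem tailProfile_le_exp (z : ℝ) : tailProfile z ≤ exp (1 - z) / 2 := by
  rcases le_or_gt z 0 with h₀ | h₀
  · rw [tailProfile_of_nonpos h₀]
    linarith [add_one_le_exp (1 - z)]
  rcases le_or_gt z 1 with h₁ | h₁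
  · rw [tailProfile_of_pos_of_le_one h₀ h₁, div_le_div_iff₀ (by positivity) two_pos]
    have h := quadratic_le_exp_of_nonneg (by linarith : 0 ≤ 1 - z)
    nlinarith [pow_nonneg (by linarith : (0 : ℝ) ≤ 1 - z) 4]
  · rw [tailProfile_of_one_lt h₁]

theorem tailProfile_le_inv_one_add_sq (hz : 0 ≤ z) : tailProfile z ≤ 1 / (1 + z ^ 2) := by
  rcases hz.eq_or_lt with rfl | h₀
  · simp [tailProfile_of_nonpos]
  rcases le_or_gt z 1 with h₁ | h₁
  · rw [tailProfile_of_pos_of_le_one h₀ h₁]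
  · rw [tailProfile_of_one_lt h₁, div_le_div_iff₀ two_pos (by positivity)]
    have h := quadratic_le_exp_of_nonneg (by linarith : 0 ≤ z - 1)
    have hinv : exp (1 - z) * exp (z - 1) = 1 := by rw [← exp_add]; simp
    nlinarith [exp_pos (1 - z)]

theorem measurable_tailProfile : Measurable tailProfile :=
  Measurable.ite measurableSet_Iic measurable_const <|
    Measurable.ite measurableSet_Iic (by fun_prop) (by fun_prop)

theorem measurable_tailProfileDeriv : Measurable tailProfileDeriv :=
  Measurable.ite measurableSet_Iic measurable_const <|
    Measurable.ite measurableSet_Iic (by fun_prop) (by fun_prop)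

end tailProfile

section KeyInequality

variable {z u c : ℝ}

-- The Cantelli profile `1 / (1 + z²)` satisfies the key inequality on the whole line.
theorem inv_one_add_sq_sub_div_le (hc : 0 < c) (hc2 : c ^ 2 = 1 - u ^ 2) :
    1 / (1 + ((z - u) / c) ^ 2) ≤ 1 / (1 + z ^ 2) - u * (-(2 * z) / (1 + z ^ 2) ^ 2) := by
  have hw : ((z - u) / c) ^ 2 * c ^ 2 = (z - u) ^ 2 := by
    rw [div_pow, div_mul_cancel₀ _ (by positivity)]
  have hrhs : 1 / (1 + z ^ 2) - u * (-(2 * z) / (1 + z ^ 2) ^ 2)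
      = (1 + z ^ 2 + 2 * z * u) / (1 + z ^ 2) ^ 2 := by
    field_simp; ring
  rw [hrhs, div_le_div_iff₀ (by positivity) (by positivity)]
  refine le_of_mul_le_mul_right ?_ (pow_pos hc 2)
  nlinarith [mul_nonneg (sq_nonneg u) (sq_nonneg (1 - z ^ 2))]

theorem tailProfile_sub_div_le_of_pos_of_le_one (hc : 0 < c) (hc2 : c ^ 2 = 1 - u ^ 2)
    (h₀ : 0 < z) (h₁ : z ≤ 1) :
    tailProfile ((z - u) / c) ≤ tailProfile z - u * tailProfileDeriv z := by
  rw [tailProfile_of_pos_of_le_one h₀ h₁, tailProfileDeriv_of_pos_of_le_one h₀ h₁]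
  rcases le_or_gt ((z - u) / c) 0 with hw | hw
  · have hzu : z ≤ u := by rw [div_le_iff₀ hc, zero_mul] at hw; linarith
    have hrhs : 1 / (1 + z ^ 2) - u * (-(2 * z) / (1 + z ^ 2) ^ 2)
        = (1 + z ^ 2 + 2 * z * u) / (1 + z ^ 2) ^ 2 := by
      field_simp; ring
    rw [tailProfile_of_nonpos hw, hrhs, le_div_iff₀ (by positivity)]
    nlinarith [mul_le_mul_of_nonneg_left hzu h₀.le, mul_le_mul_of_nonneg_left h₁ (sq_nonneg z)]
  · exact (tailProfile_le_inv_one_add_sq hw.le).trans (inv_one_add_sq_sub_div_le hc hc2)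

theorem tailProfile_sub_div_le_of_one_lt (hc : 0 < c) (hc2 : c ^ 2 = 1 - u ^ 2) (h : 1 < z) :
    tailProfile ((z - u) / c) ≤ tailProfile z - u * tailProfileDeriv z := by
  rw [tailProfile_of_one_lt h, tailProfileDeriv_of_one_lt h]
  have hu : u < 1 := by nlinarith
  have hc1 : c ≤ 1 := by nlinarith
  set w := (z - u) / c
  have hwc : w * c = z - u := div_mul_cancel₀ _ hc.ne'
  clear_value w
  rcases le_or_gt w 1 with hw1 | hw1
  · have hw0 : 0 < w := by nlinarith
    rw [tailProfile_of_pos_of_le_one hw0 hw1]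
    have hzu : (z - u) ^ 2 ≤ c ^ 2 :=
      pow_le_pow_left₀ (by linarith : 0 ≤ z - u) (by nlinarith : z - u ≤ c) 2
    have hexp := two_mul_mul_exp_le (q := z - 1) (t := 1 - u) (by linarith) (by nlinarith)
      (by linarith) (by nlinarith)
    have hid : 2 * (1 - u) + 2 * (z - 1) * (1 - u) + (z - 1) ^ 2
        = (1 - u) * ((1 + u) * (1 + w ^ 2)) := by
      linear_combination w ^ 2 * hc2 - (z - u + w * c) * hwc
    have h2 : 2 * exp (z - 1) ≤ (1 + u) * (1 + w ^ 2) := by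
      rw [hid] at hexp; nlinarith
    have hinv : exp (1 - z) * exp (z - 1) = 1 := by rw [← exp_add]; simp
    rw [div_le_iff₀ (by positivity)]
    nlinarith [exp_pos (1 - z)]
  · rw [tailProfile_of_one_lt hw1]
    have hkey : exp (z - w) ≤ 1 + u := by
      rcases le_or_gt u 0 with hu0 | hu0
      · calc exp (z - w) ≤ exp ((u - 1 + c) / c) := by
              rw [exp_le_exp, le_div_iff₀ hc]; nlinarith
          _ ≤ 1 + u := exp_sub_one_add_div_le_one_add hc hc2 hu0
      · calc exp (z - w) ≤ exp (u - u ^ 2 / 2) := by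
              rw [exp_le_exp]; nlinarith
          _ ≤ 1 + u := exp_sub_sq_div_two_le_one_add hu0.le hu.le
    calc exp (1 - w) / 2 = exp (1 - z) * exp (z - w) / 2 := by rw [← exp_add]; ring_nf
      _ ≤ exp (1 - z) * (1 + u) / 2 := by gcongr
      _ = exp (1 - z) / 2 - u * -(exp (1 - z) / 2) := by ring

theorem tailProfile_sub_div_le (hc : 0 < c) (hc2 : c ^ 2 = 1 - u ^ 2) :
    tailProfile ((z - u) / c) ≤ tailProfile z - u * tailProfileDeriv z := by
  rcases le_or_gt z 0 with h₀ | h₀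
  · rw [tailProfile_of_nonpos h₀, tailProfileDeriv_of_nonpos h₀, mul_zero, sub_zero]
    exact tailProfile_le_one _
  rcases le_or_gt z 1 with h₁ | h₁
  · exact tailProfile_sub_div_le_of_pos_of_le_one hc hc2 h₀ h₁
  · exact tailProfile_sub_div_le_of_one_lt hc hc2 h₁

theorem tailProfile_add_deriv_nonneg (z : ℝ) : 0 ≤ tailProfile z + tailProfileDeriv z := by
  rcases le_or_gt z 0 with h₀ | h₀
  · rw [tailProfile_of_nonpos h₀, tailProfileDeriv_of_nonpos h₀]; norm_num
  rcases le_or_gt z 1 with h₁ | h₁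
  · rw [tailProfile_of_pos_of_le_one h₀ h₁, tailProfileDeriv_of_pos_of_le_one h₀ h₁]
    have : 1 / (1 + z ^ 2) + -(2 * z) / (1 + z ^ 2) ^ 2 = (1 - z) ^ 2 / (1 + z ^ 2) ^ 2 := by
      field_simp; ring
    rw [this]; positivity
  · rw [tailProfile_of_one_lt h₁, tailProfileDeriv_of_one_lt h₁]; simp

theorem one_le_tailProfile_sub_deriv (h : z ≤ 1) : 1 ≤ tailProfile z - tailProfileDeriv z := by
  rcases le_or_gt z 0 with h₀ | h₀
  · rw [tailProfile_of_nonpos h₀, tailProfileDeriv_of_nonpos h₀]; norm_num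
  rw [tailProfile_of_pos_of_le_one h₀ h, tailProfileDeriv_of_pos_of_le_one h₀ h]
  have : 1 / (1 + z ^ 2) - -(2 * z) / (1 + z ^ 2) ^ 2 = (1 + z) ^ 2 / (1 + z ^ 2) ^ 2 := by
    field_simp; ring
  rw [this, le_div_iff₀ (by positivity)]
  nlinarith [mul_le_mul_of_nonneg_left h (sq_nonneg z)]

theorem indicator_le_tailProfile_sub_mul_deriv (hu : u ^ 2 = 1) :
    (if z ≤ u then 1 else 0) ≤ tailProfile z - u * tailProfileDeriv z := by
  rcases sq_eq_one_iff.mp hu with rfl | rfl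
  · split_ifs with hz
    · simpa using one_le_tailProfile_sub_deriv hz
    · linarith [tailProfile_nonneg z, tailProfileDeriv_nonpos z]
  · split_ifs with hz
    · rw [tailProfile_of_nonpos (by linarith), tailProfileDeriv_of_nonpos (by linarith)]; norm_num
    · simpa using tailProfile_add_deriv_nonneg z

end KeyInequality

noncomputable def bellman (x v : ℝ) : ℝ :=
  if 0 < v then tailProfile (x / √v) else if x ≤ 0 then 1 else 0

-- `∂ bellman / ∂x`.
noncomputable def bellmanSlope (x v : ℝ) : ℝ :=
  if 0 < v then tailProfileDeriv (x / √v) / √v else 0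

section Bellman

variable {x v h : ℝ}

theorem bellman_one (x : ℝ) : bellman x 1 = tailProfile x := by simp [bellman]

theorem bellman_of_nonpos (hx : x ≤ 0) : bellman x v = 1 := by
  unfold bellman
  split_ifs with hv
  · exact tailProfile_of_nonpos (div_nonpos_of_nonpos_of_nonneg hx (sqrt_nonneg v))
  · rfl

theorem bellman_nonneg (x v : ℝ) : 0 ≤ bellman x v := by
  unfold bellman; split_ifs
  exacts [tailProfile_nonneg _, zero_le_one, le_rfl]

theorem bellman_le_one (x v : ℝ) : bellman x v ≤ 1 := by
  unfold bellman; split_ifs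
  exacts [tailProfile_le_one _, le_rfl, zero_le_one]

theorem abs_bellmanSlope_mul_le_one (hv : h ^ 2 ≤ v) : |bellmanSlope x v * h| ≤ 1 := by
  unfold bellmanSlope
  split_ifs with hv₀
  · have hs : 0 < √v := sqrt_pos.mpr hv₀
    have hh : |h| ≤ √v := by rw [← sqrt_sq_eq_abs]; exact sqrt_le_sqrt hv
    have hF : |tailProfileDeriv (x / √v)| ≤ 1 :=
      abs_le.mpr ⟨neg_one_le_tailProfileDeriv _, (tailProfileDeriv_nonpos _).trans zero_le_one⟩
    rw [abs_mul, abs_div, abs_of_pos hs, div_mul_eq_mul_div, div_le_one hs]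
    nlinarith [abs_nonneg h, abs_nonneg (tailProfileDeriv (x / √v))]
  · simp

theorem bellman_sub_le (hv : h ^ 2 ≤ v) :
    bellman (x - h) (v - h ^ 2) ≤ bellman x v - bellmanSlope x v * h := by
  rcases le_or_gt v 0 with hv₀ | hv₀
  · obtain rfl : h = 0 := pow_eq_zero_iff two_ne_zero |>.mp (by nlinarith [sq_nonneg h])
    simp
  set s := √v
  have hs : 0 < s := sqrt_pos.mpr hv₀
  have hs2 : s ^ 2 = v := sq_sqrt hv₀.le
  have hrhs : bellman x v - bellmanSlope x v * h
      = tailProfile (x / s) - h / s * tailProfileDeriv (x / s) := by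
    rw [bellman, bellmanSlope, if_pos hv₀, if_pos hv₀]; ring
  rw [hrhs]
  rcases hv.lt_or_eq with hlt | heq
  · have hc : 0 < √(v - h ^ 2) / s := div_pos (sqrt_pos.mpr (by linarith)) hs
    have hc2 : (√(v - h ^ 2) / s) ^ 2 = 1 - (h / s) ^ 2 := by
      rw [div_pow, div_pow, sq_sqrt (by linarith), hs2]; field_simp
    have hw : (x / s - h / s) / (√(v - h ^ 2) / s) = (x - h) / √(v - h ^ 2) := by
      field_simp
    rw [bellman, if_pos (by linarith), ← hw]
    exact tailProfile_sub_div_le hc hc2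
  · have hu : (h / s) ^ 2 = 1 := by rw [div_pow, hs2, heq, div_self hv₀.ne']
    have hxh : x - h ≤ 0 ↔ x / s ≤ h / s := by rw [div_le_div_iff_of_pos_right hs, sub_nonpos]
    rw [bellman, ← heq, sub_self, if_neg (lt_irrefl 0)]
    simp only [hxh]
    exact indicator_le_tailProfile_sub_mul_deriv hu

theorem measurable_bellman : Measurable (Function.uncurry bellman) :=
  Measurable.ite (measurableSet_lt measurable_const measurable_snd)
    (measurable_tailProfile.comp (by fun_prop)) <|
    Measurable.ite (measurableSet_le measurable_fst measurable_const) measurable_const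
      measurable_const

theorem measurable_bellmanSlope : Measurable (Function.uncurry bellmanSlope) :=
  Measurable.ite (measurableSet_lt measurable_const measurable_snd)
    ((measurable_tailProfileDeriv.comp (by fun_prop)).div (by fun_prop)) measurable_const

end Bellman

section Martingale

variable {Ω : Type*} {m : MeasurableSpace Ω} {μ : Measure Ω} {ℱ : Filtration ℕ m}
  {f : ℕ → Ω → ℝ} {n : ℕ}

theorem MeasureTheory.Martingale.integral_mul_sub_eq_zero_s5 [IsFiniteMeasure μ]
    (hf : Martingale f ℱ μ) {g : Ω → ℝ} (hg : StronglyMeasurable[ℱ n] g)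
    (hgf : Integrable (g * (f (n + 1) - f n)) μ) :
    ∫ ω, g ω * (f (n + 1) ω - f n ω) ∂μ = 0 := by
  have hd : μ[f (n + 1) - f n | ℱ n] =ᵐ[μ] 0 := by
    filter_upwards [condExp_sub (hf.integrable (n + 1)) (hf.integrable n) (ℱ n),
      hf.condExp_ae_eq n.le_succ] with ω h₁ h₂
    rw [h₁, Pi.sub_apply, h₂,
      condExp_of_stronglyMeasurable (ℱ.le n) (hf.stronglyAdapted n) (hf.integrable n)]
    simp
  have hgd : μ[g * (f (n + 1) - f n) | ℱ n] =ᵐ[μ] 0 := by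
    filter_upwards [condExp_mul_of_stronglyMeasurable_left hg hgf
      ((hf.integrable _).sub (hf.integrable _)), hd] with ω h₁ h₂
    rw [h₁, Pi.mul_apply, h₂, Pi.zero_apply, mul_zero]
  rw [← integral_condExp (ℱ.le n)]
  exact (integral_congr_ae hgd).trans (integral_zero _ _)

def squareSum (f : ℕ → Ω → ℝ) (n : ℕ) (ω : Ω) : ℝ :=
  ∑ k ∈ Finset.range n, (f (k + 1) ω - f k ω) ^ 2

theorem squareSum_succ (n : ℕ) (ω : Ω) :
    squareSum f (n + 1) ω = squareSum f n ω + (f (n + 1) ω - f n ω) ^ 2 :=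
  Finset.sum_range_succ _ _

theorem squareSum_le_one {N : ℕ} (hN : ∀ n, N ≤ n → f n = f N) {ω : Ω}
    (hS : √(∑' k, (f (k + 1) ω - f k ω) ^ 2) ≤ 1) (n : ℕ) : squareSum f n ω ≤ 1 := by
  have hsum : Summable fun k => (f (k + 1) ω - f k ω) ^ 2 := by
    refine summable_of_ne_finset_zero (s := Finset.range N) fun k hk => ?_
    have hk : N ≤ k := by simpa using hk
    simp [hN k hk, hN (k + 1) (by omega)]
  exact (hsum.sum_le_tsum _ fun k _ => sq_nonneg _).trans (sqrt_le_one.mp hS)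

theorem MeasureTheory.StronglyAdapted.measurable_squareSum (hf : StronglyAdapted ℱ f) (n : ℕ) :
    Measurable[ℱ n] (squareSum f n) := by
  have hmeas : ∀ k ≤ n, Measurable[ℱ n] (f k) :=
    fun k hk => ((hf k).mono (ℱ.mono hk)).measurable
  refine Finset.measurable_sum _ fun k hk => ?_
  have hk : k + 1 ≤ n := Finset.mem_range.mp hk
  exact ((hmeas (k + 1) hk).sub (hmeas k (by omega))).pow_const 2

theorem MeasureTheory.StronglyAdapted.measurable_bellmanState (hf : StronglyAdapted ℱ f) (x : ℝ)
    (n : ℕ) :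
    Measurable[ℱ n] fun ω => (x - (f n ω - f 0 ω), 1 - squareSum f n ω) :=
  (measurable_const.sub ((hf n).measurable.sub ((hf 0).mono (ℱ.mono n.zero_le)).measurable)).prodMk
    (measurable_const.sub (hf.measurable_squareSum n))

noncomputable def bellmanProcess (f : ℕ → Ω → ℝ) (x : ℝ) (n : ℕ) (ω : Ω) : ℝ :=
  bellman (x - (f n ω - f 0 ω)) (1 - squareSum f n ω)

theorem bellmanProcess_zero (x : ℝ) (ω : Ω) : bellmanProcess f x 0 ω = tailProfile x := by
  simp [bellmanProcess, squareSum, bellman_one]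

theorem bellmanProcess_succ_le (x : ℝ) {ω : Ω} (hQ : squareSum f (n + 1) ω ≤ 1) :
    bellmanProcess f x (n + 1) ω ≤ bellmanProcess f x n ω
      - bellmanSlope (x - (f n ω - f 0 ω)) (1 - squareSum f n ω) * (f (n + 1) ω - f n ω) := by
  rw [squareSum_succ] at hQ
  have h := bellman_sub_le (x := x - (f n ω - f 0 ω)) (h := f (n + 1) ω - f n ω)
    (v := 1 - squareSum f n ω) (by linarith)
  rw [bellmanProcess, bellmanProcess, squareSum_succ]
  convert h using 2 <;> ring

theorem MeasureTheory.StronglyAdapted.integrable_bellmanProcess [IsFiniteMeasure μ]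
    (hf : StronglyAdapted ℱ f) (x : ℝ) (n : ℕ) : Integrable (bellmanProcess f x n) μ := by
  refine .of_bound ((measurable_bellman.comp (hf.measurable_bellmanState x n)).mono (ℱ.le n)
    le_rfl).aestronglyMeasurable 1 (ae_of_all _ fun ω => ?_)
  exact abs_le.mpr ⟨(neg_nonpos.mpr zero_le_one).trans (bellman_nonneg _ _), bellman_le_one _ _⟩

theorem MeasureTheory.Martingale.integral_bellmanProcess_succ_le [IsFiniteMeasure μ]
    (hf : Martingale f ℱ μ) (hQ : ∀ᵐ ω ∂μ, ∀ n, squareSum f n ω ≤ 1) (x : ℝ) (n : ℕ) :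
    ∫ ω, bellmanProcess f x (n + 1) ω ∂μ ≤ ∫ ω, bellmanProcess f x n ω ∂μ := by
  set g := fun ω => bellmanSlope (x - (f n ω - f 0 ω)) (1 - squareSum f n ω)
  have hg : StronglyMeasurable[ℱ n] g :=
    (measurable_bellmanSlope.comp
      (hf.stronglyAdapted.measurable_bellmanState x n)).stronglyMeasurable
  have hgd : Integrable (g * (f (n + 1) - f n)) μ := by
    refine .of_bound ((hg.mono (ℱ.le n)).aestronglyMeasurable.mul
      ((hf.integrable _).sub (hf.integrable _)).aestronglyMeasurable) 1 ?_
    filter_upwards [hQ] with ω hω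
    have hv := hω (n + 1)
    rw [squareSum_succ] at hv
    exact abs_bellmanSlope_mul_le_one (h := f (n + 1) ω - f n ω) (by linarith)
  have hU := hf.stronglyAdapted.integrable_bellmanProcess (μ := μ) x
  calc ∫ ω, bellmanProcess f x (n + 1) ω ∂μ
      ≤ ∫ ω, (bellmanProcess f x n ω - g ω * (f (n + 1) ω - f n ω)) ∂μ :=
        integral_mono_ae (hU _) ((hU n).sub hgd) <| by
          filter_upwards [hQ] with ω hω using bellmanProcess_succ_le x (hω (n + 1))
    _ = ∫ ω, bellmanProcess f x n ω ∂μ - ∫ ω, g ω * (f (n + 1) ω - f n ω) ∂μ :=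
        integral_sub (hU n) hgd
    _ = ∫ ω, bellmanProcess f x n ω ∂μ := by rw [hf.integral_mul_sub_eq_zero_s5 hg hgd, sub_zero]

theorem MeasureTheory.Martingale.integral_bellmanProcess_le [IsProbabilityMeasure μ]
    (hf : Martingale f ℱ μ) (hQ : ∀ᵐ ω ∂μ, ∀ n, squareSum f n ω ≤ 1) (x : ℝ) (n : ℕ) :
    ∫ ω, bellmanProcess f x n ω ∂μ ≤ tailProfile x := by
  have hanti : Antitone fun n => ∫ ω, bellmanProcess f x n ω ∂μ :=
    antitone_nat_of_succ_le (hf.integral_bellmanProcess_succ_le hQ x)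
  simpa [bellmanProcess_zero] using hanti n.zero_le

end Martingale

theorem tail_estimate_general
    {X : Type*} {m : MeasurableSpace X} {μ : Measure X} [IsProbabilityMeasure μ]
    (ℱ : Filtration ℕ m)
    (φ : ℕ → X → ℝ) (hmart : Martingale φ ℱ μ)
    (N : ℕ) (hsimple : ∀ n, N ≤ n → φ n = φ N)
    (hS : ∀ᵐ ω ∂μ, Real.sqrt (∑' n, (φ (n + 1) ω - φ n ω) ^ 2) ≤ 1)
    (lam : ℝ) :
    μ {ω | lam ≤ φ N ω - φ 0 ω} ≤ ENNReal.ofReal (Real.exp 1 / 2 * Real.exp (-lam)) := by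
  set A := {ω | lam ≤ φ N ω - φ 0 ω}
  have hA : MeasurableSet A := measurableSet_le measurable_const <|
    ((hmart.stronglyAdapted N).mono (ℱ.le N)).measurable.sub
      ((hmart.stronglyAdapted 0).mono (ℱ.le 0)).measurable
  have hind : A.indicator 1 ≤ bellmanProcess φ lam N := fun ω => by
    by_cases hω : ω ∈ A
    · rw [Set.indicator_of_mem hω, Pi.one_apply, bellmanProcess,
        bellman_of_nonpos (by linarith [show lam ≤ φ N ω - φ 0 ω from hω])]
    · rw [Set.indicator_of_notMem hω]
      exact bellman_nonneg _ _
  rw [← ENNReal.ofReal_toReal (measure_ne_top μ A), ← measureReal_def]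
  refine ENNReal.ofReal_le_ofReal ?_
  calc μ.real A = ∫ ω, A.indicator 1 ω ∂μ := (integral_indicator_one hA).symm
    _ ≤ ∫ ω, bellmanProcess φ lam N ω ∂μ := integral_mono ((integrable_const 1).indicator hA)
        (hmart.stronglyAdapted.integrable_bellmanProcess lam N) hind
    _ ≤ tailProfile lam :=
        hmart.integral_bellmanProcess_le (hS.mono fun ω hω => squareSum_le_one hsimple hω) lam N
    _ ≤ exp (1 - lam) / 2 := tailProfile_le_exp lam
    _ = exp 1 / 2 * exp (-lam) := by rw [sub_eq_add_neg, exp_add]; ring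

/-- If the square function of a simple martingale `φ` satisfies
`Sφ ≤ 1` almost surely, then `P(φ_∞ − φ_0 ≥ λ) ≤ (e/2)·e^{−λ}` for every `λ > 0`. -/
theorem tail_estimate
    {X : Type*} {m : MeasurableSpace X} {μ : Measure X} [IsProbabilityMeasure μ]
    (ℱ : Filtration ℕ m) (hℱ0 : ℱ 0 = ⊥)
    (φ : ℕ → X → ℝ) (hmart : Martingale φ ℱ μ)
    (N : ℕ) (hsimple : ∀ n, N ≤ n → φ n = φ N)
    (hS : ∀ᵐ ω ∂μ, Real.sqrt (∑' n, (φ (n + 1) ω - φ n ω) ^ 2) ≤ 1)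
    (lam : ℝ) (hlam : 0 < lam) :
    μ {ω | lam ≤ φ N ω - φ 0 ω} ≤ ENNReal.ofReal (Real.exp 1 / 2 * Real.exp (-lam)) :=
  tail_estimate_general ℱ φ hmart N hsimple hS lam
end

section
/- The exponential rate c_1 = 1 in the subexponential tail estimate is optimal: for every c_1 > 1, every c_2 > 0, and every atomless probability space (X, Σ, P), there exist λ > 0, a filtration {F_n}_{n≥0} with F_0 trivial, and a simple martingale φ adapted to it such that Sφ ≤ 1 almost surely and P(φ_∞ − φ_0 ≥ λ) > c_2·e^{−c_1·λ}. -/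
/-!
On an atomless space a greedy exhaustion yields sets `X = A₀ ⊇ A₁ ⊇ ⋯` whose successive measure
ratios lie in `[exp (-(d / δ + d ^ 2)), δ / (d + δ)]`. The martingale rises by `d` on `A (k + 1)`
and falls once, on `A k \ A (k + 1)`, by the weight `c k ≤ δ` that makes the step mean zero. So
`(Sφ)² ≤ N d² + δ²`, while on `A N` it has risen by `λ = N d`, an event of probability at least
`exp (-λ (1 / δ + d))`. With `1 / c₁ < δ < 1`, `λ` large and `d = λ / N` small this exceeds
`c₂ exp (-c₁ λ)`.
-/

open MeasureTheory

open scoped ENNReal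

namespace MeasureTheory.Measure

variable {X : Type*} {m : MeasurableSpace X}

def IsAtomless (μ : Measure X) : Prop :=
  ∀ s : Set X, MeasurableSet s → 0 < μ s →
    ∃ t : Set X, t ⊆ s ∧ MeasurableSet t ∧ 0 < μ t ∧ μ t < μ s

namespace IsAtomless

variable {μ : Measure X} [IsFiniteMeasure μ] {s : Set X}

lemma exists_subset_pos_le_half (hμ : μ.IsAtomless) (hs : MeasurableSet s) (hpos : 0 < μ s) :
    ∃ t ⊆ s, MeasurableSet t ∧ 0 < μ t ∧ μ t ≤ μ s / 2 := by
  obtain ⟨u, hus, hu, hu_pos, hu_lt⟩ := hμ s hs hpos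
  rcases le_or_gt (μ u) (μ s / 2) with h | h
  · exact ⟨u, hus, hu, hu_pos, h⟩
  have hdiff : μ (s \ u) = μ s - μ u :=
    measure_sdiff hus hu.nullMeasurableSet (measure_ne_top μ u)
  refine ⟨s \ u, Set.sdiff_subset, hs.diff hu, by rwa [hdiff, tsub_pos_iff_lt], ?_⟩
  rw [hdiff, tsub_le_iff_right]
  calc μ s = μ s / 2 + μ s / 2 := (ENNReal.add_halves _).symm
    _ ≤ μ s / 2 + μ u := by gcongr

lemma exists_subset_pos_le (hμ : μ.IsAtomless) (hs : MeasurableSet s) (hpos : 0 < μ s)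
    {ε : ℝ≥0∞} (hε : 0 < ε) : ∃ t ⊆ s, MeasurableSet t ∧ 0 < μ t ∧ μ t ≤ ε := by
  have halving : ∀ n : ℕ, ∃ t ⊆ s, MeasurableSet t ∧ 0 < μ t ∧ μ t ≤ μ s * 2⁻¹ ^ n := by
    intro n
    induction n with
    | zero => exact ⟨s, subset_rfl, hs, hpos, by simp⟩
    | succ n ih =>
      obtain ⟨t, hts, ht, ht_pos, ht_le⟩ := ih
      obtain ⟨u, hut, hu, hu_pos, hu_le⟩ := hμ.exists_subset_pos_le_half ht ht_pos
      refine ⟨u, hut.trans hts, hu, hu_pos, hu_le.trans ?_⟩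
      rw [pow_succ, ← mul_assoc, ← div_eq_mul_inv]
      gcongr
  obtain ⟨n, hn⟩ :=
    ENNReal.exists_inv_two_pow_lt (ENNReal.div_pos hε.ne' (measure_ne_top μ s)).ne'
  obtain ⟨t, hts, ht, ht_pos, ht_le⟩ := halving n
  refine ⟨t, hts, ht, ht_pos, ht_le.trans ?_⟩
  calc μ s * 2⁻¹ ^ n ≤ μ s * (ε / μ s) := by gcongr
    _ ≤ ε := ENNReal.mul_div_le

lemma exists_subset_almost_maximal (hμ : μ.IsAtomless) (hs : MeasurableSet s) (hpos : 0 < μ s)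
    {c : ℝ≥0∞} (hc : 0 < c) :
    ∃ t ⊆ s, MeasurableSet t ∧ μ t ≤ c ∧
      ∀ t' ⊆ s, MeasurableSet t' → μ t' ≤ c → μ t' ≤ 2 * μ t := by
  set σ := ⨆ (t : Set X) (_ : t ⊆ s ∧ MeasurableSet t ∧ μ t ≤ c), μ t
  have le_σ : ∀ t ⊆ s, MeasurableSet t → μ t ≤ c → μ t ≤ σ :=
    fun t hts ht htc => le_iSup₂_of_le t ⟨hts, ht, htc⟩ le_rfl
  obtain ⟨t₀, ht₀s, ht₀, ht₀_pos, ht₀_le⟩ := hμ.exists_subset_pos_le hs hpos hc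
  have hσ_pos : 0 < σ := ht₀_pos.trans_le (le_σ t₀ ht₀s ht₀ ht₀_le)
  have hσ_top : σ ≠ ⊤ :=
    ne_top_of_le_ne_top (measure_ne_top μ s) (iSup₂_le fun t ht => measure_mono ht.1)
  obtain ⟨t, ⟨hts, ht, htc⟩, hσt⟩ : ∃ t, (t ⊆ s ∧ MeasurableSet t ∧ μ t ≤ c) ∧ σ / 2 < μ t := by
    have h := ENNReal.half_lt_self hσ_pos.ne' hσ_top
    simpa only [σ, lt_iSup_iff, exists_prop] using h
  refine ⟨t, hts, ht, htc, fun t' ht's ht' ht'c => ?_⟩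
  calc μ t' ≤ σ := le_σ t' ht's ht' ht'c
    _ = 2 * (σ / 2) := (ENNReal.mul_div_cancel two_ne_zero ENNReal.ofNat_ne_top).symm
    _ ≤ 2 * μ t := by gcongr

/-- Each greedy step takes at least half of the largest piece that still fits below `b`, so any
piece left outside the exhaustion bounds every step from below. -/
lemma exists_greedy_seq_of_gap (hμ : μ.IsAtomless) (hs : MeasurableSet s) {a b : ℝ≥0∞}
    (hab : a < b) (hb : b ≤ μ s) (hgap : ∀ t ⊆ s, MeasurableSet t → μ t ≤ b → μ t < a) :
    ∃ U : ℕ → Set X, Monotone U ∧ (∀ n, U n ⊆ s ∧ MeasurableSet (U n) ∧ μ (U n) ≤ b) ∧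
      ∀ t ⊆ s \ ⋃ n, U n, MeasurableSet t → μ t ≤ b - a → ∀ n : ℕ, n * μ t ≤ 2 * μ (U n) := by
  have step : ∀ u ⊆ s, MeasurableSet u → μ u ≤ b → ∃ t ⊆ s \ u, MeasurableSet t ∧
      μ t ≤ b - μ u ∧ ∀ t' ⊆ s \ u, MeasurableSet t' → μ t' ≤ b - μ u → μ t' ≤ 2 * μ t := by
    intro u hus hu hub
    have hua := hgap u hus hu hub
    exact hμ.exists_subset_almost_maximal (hs.diff hu)
      ((tsub_pos_of_lt (hua.trans (hab.trans_le hb))).trans_le le_measure_sdiff)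
      (tsub_pos_of_lt (hua.trans hab))
  choose! F hFs hFm hFle hFmax using step
  have grow : ∀ u ⊆ s, MeasurableSet u → μ u ≤ b → μ (u ∪ F u) = μ u + μ (F u) :=
    fun u hus hu hub => measure_union (Set.disjoint_sdiff_right.mono_right (hFs u hus hu hub))
      (hFm u hus hu hub)
  let U : ℕ → Set X := fun n => Nat.rec ∅ (fun _ u => u ∪ F u) n
  have hU : ∀ n, U n ⊆ s ∧ MeasurableSet (U n) ∧ μ (U n) ≤ b := by
    intro n
    induction n with
    | zero => exact ⟨Set.empty_subset s, .empty, by simp [U]⟩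
    | succ n ih =>
      obtain ⟨hus, hu, hub⟩ := ih
      refine ⟨Set.union_subset hus ((hFs _ hus hu hub).trans Set.sdiff_subset),
        hu.union (hFm _ hus hu hub), ?_⟩
      calc μ (U n ∪ F (U n)) = μ (U n) + μ (F (U n)) := grow _ hus hu hub
        _ ≤ μ (U n) + (b - μ (U n)) := by gcongr; exact hFle _ hus hu hub
        _ = b := add_tsub_cancel_of_le hub
  refine ⟨U, monotone_nat_of_le_succ fun n => Set.subset_union_left, hU, ?_⟩
  intro t hts ht htc n
  induction n with
  | zero => simp
  | succ n ih =>
    obtain ⟨hus, hu, hub⟩ := hU n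
    have hmax : μ t ≤ 2 * μ (F (U n)) := hFmax _ hus hu hub t
      (hts.trans (Set.sdiff_subset_sdiff_right (Set.subset_iUnion U n))) ht
      (htc.trans (tsub_le_tsub_left (hgap _ hus hu hub).le b))
    calc ((n + 1 : ℕ) : ℝ≥0∞) * μ t = n * μ t + μ t := by push_cast; ring
      _ ≤ 2 * μ (U n) + 2 * μ (F (U n)) := add_le_add ih hmax
      _ = 2 * μ (U (n + 1)) := by rw [← mul_add, ← grow _ hus hu hub]

lemma exists_subset_measure_mem_Icc (hμ : μ.IsAtomless) (hs : MeasurableSet s) {a b : ℝ≥0∞}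
    (hab : a < b) (hb : b ≤ μ s) : ∃ t ⊆ s, MeasurableSet t ∧ a ≤ μ t ∧ μ t ≤ b := by
  by_contra! hnot
  have hgap : ∀ t ⊆ s, MeasurableSet t → μ t ≤ b → μ t < a :=
    fun t hts ht htb => not_le.1 fun hat => (hnot t hts ht hat).not_ge htb
  obtain ⟨U, hmono, hU, hlinear⟩ := hμ.exists_greedy_seq_of_gap hs hab hb hgap
  have hsmall : ∀ n, μ (U n) < a := fun n => hgap _ (hU n).1 (hU n).2.1 (hU n).2.2
  have hWm : MeasurableSet (⋃ n, U n) := .iUnion fun n => (hU n).2.1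
  have hW : μ (⋃ n, U n) ≤ a := by
    rw [hmono.measure_iUnion]
    exact iSup_le fun n => (hsmall n).le
  obtain ⟨t, hts, ht, ht_pos, htc⟩ := hμ.exists_subset_pos_le (hs.diff hWm)
    ((tsub_pos_of_lt (hW.trans_lt (hab.trans_le hb))).trans_le le_measure_sdiff)
    (tsub_pos_of_lt hab)
  have h2a : (2 : ℝ≥0∞) * a ≠ ⊤ :=
    ENNReal.mul_ne_top ENNReal.ofNat_ne_top (ne_top_of_lt (hab.trans_le hb))
  obtain ⟨n, hn⟩ := ENNReal.exists_nat_mul_gt ht_pos.ne' h2a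
  have : 2 * μ (U n) < 2 * a := by gcongr; exacts [ENNReal.ofNat_ne_top, hsmall n]
  exact (hn.trans_le ((hlinear t hts ht htc n).trans this.le)).false

lemma exists_subset_measureReal_mem_Icc (hμ : μ.IsAtomless) (hs : MeasurableSet s)
    (hpos : 0 < μ s) {r q : ℝ} (hrq : r < q) (hq₀ : 0 < q) (hq : q ≤ 1) :
    ∃ t ⊆ s, MeasurableSet t ∧ r * μ.real s ≤ μ.real t ∧ μ.real t ≤ q * μ.real s := by
  have hs_real : 0 < μ.real s := ENNReal.toReal_pos hpos.ne' (measure_ne_top μ s)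
  obtain ⟨t, hts, ht, hrt, htq⟩ := hμ.exists_subset_measure_mem_Icc hs
    (a := .ofReal (r * μ.real s)) (b := .ofReal (q * μ.real s))
    ((ENNReal.ofReal_lt_ofReal_iff (by positivity)).2 (by gcongr))
    (by
      rw [← ofReal_measureReal (measure_ne_top μ s)]
      gcongr
      exact mul_le_of_le_one_left hs_real.le hq)
  exact ⟨t, hts, ht, (ENNReal.ofReal_le_iff_le_toReal (measure_ne_top μ t)).1 hrt,
    ENNReal.toReal_le_of_le_ofReal (by positivity) htq⟩

lemma exists_antitone_measureReal_ratio_mem_Icc [NeZero μ] (hμ : μ.IsAtomless) {r q : ℝ}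
    (hr : 0 < r) (hrq : r < q) (hq : q ≤ 1) :
    ∃ A : ℕ → Set X, A 0 = Set.univ ∧ Antitone A ∧ (∀ k, MeasurableSet (A k)) ∧
      ∀ k, r * μ.real (A k) ≤ μ.real (A (k + 1)) ∧ μ.real (A (k + 1)) ≤ q * μ.real (A k) := by
  have step : ∀ s, MeasurableSet s → 0 < μ s → ∃ t ⊆ s, MeasurableSet t ∧ 0 < μ t ∧
      r * μ.real s ≤ μ.real t ∧ μ.real t ≤ q * μ.real s := by
    intro s hs hpos
    obtain ⟨t, hts, ht, hrt, htq⟩ :=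
      hμ.exists_subset_measureReal_mem_Icc hs hpos hrq (hr.trans hrq) hq
    have : 0 < μ.real t :=
      (mul_pos hr (ENNReal.toReal_pos hpos.ne' (measure_ne_top μ s))).trans_le hrt
    exact ⟨t, hts, ht, (ENNReal.toReal_pos_iff.1 this).1, hrt, htq⟩
  choose! F hFs hFm hFpos hFr hFq using step
  have hA : ∀ n, MeasurableSet (F^[n] Set.univ) ∧ 0 < μ (F^[n] Set.univ) := by
    intro n
    induction n with
    | zero => exact ⟨.univ, measure_univ_pos.2 (NeZero.ne μ)⟩
    | succ n ih =>
      rw [Function.iterate_succ_apply']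
      exact ⟨hFm _ ih.1 ih.2, hFpos _ ih.1 ih.2⟩
  refine ⟨fun n => F^[n] Set.univ, rfl, antitone_nat_of_succ_le fun n => ?_, fun n => (hA n).1,
    fun n => ?_⟩ <;> simp only [Function.iterate_succ_apply']
  exacts [hFs _ (hA n).1 (hA n).2, ⟨hFr _ (hA n).1 (hA n).2, hFq _ (hA n).1 (hA n).2⟩]

end IsAtomless
end MeasureTheory.Measure

noncomputable section ChainMartingale

variable {X : Type*} {m : MeasurableSpace X} (A : ℕ → Set X)

def chainFiltration (hA : ∀ k, MeasurableSet (A k)) : Filtration ℕ m where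
  seq n := MeasurableSpace.generateFrom (A '' Set.Iic n)
  mono' _ _ hij := MeasurableSpace.generateFrom_mono (Set.image_mono (Set.Iic_subset_Iic.2 hij))
  le' _ := MeasurableSpace.generateFrom_le (by rintro _ ⟨k, -, rfl⟩; exact hA k)

/-- Increment `k` of the chain martingale: `d` on `A (k + 1)`, `-c k` on `A k \ A (k + 1)`. -/
def chainIncrement (d : ℝ) (c : ℕ → ℝ) (k : ℕ) (ω : X) : ℝ :=
  (A (k + 1)).indicator (fun _ => d + c k) ω - (A k).indicator (fun _ => c k) ω

def chainProcess (d : ℝ) (c : ℕ → ℝ) (N n : ℕ) (ω : X) : ℝ :=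
  ∑ k ∈ Finset.range (min n N), chainIncrement A d c k ω

variable {A} {hA : ∀ k, MeasurableSet (A k)} {d δ : ℝ} {c : ℕ → ℝ} {N : ℕ}

lemma chainFiltration_zero (h0 : A 0 = Set.univ) : chainFiltration A hA 0 = ⊥ := by
  change MeasurableSpace.generateFrom (A '' Set.Iic 0) = ⊥
  rw [show Set.Iic 0 = {0} from Set.Iic_bot, Set.image_singleton, h0,
    MeasurableSpace.generateFrom_singleton_univ]

lemma subset_or_disjoint_of_measurableSet_chainFiltration (hanti : Antitone A) {n : ℕ}
    {s : Set X} (hs : MeasurableSet[chainFiltration A hA n] s) : A n ⊆ s ∨ Disjoint (A n) s := by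
  induction s, hs using MeasurableSpace.generateFrom_induction with
  | hC t ht _ =>
    obtain ⟨k, hk, rfl⟩ := ht
    exact .inl (hanti hk)
  | empty => exact .inr (Set.disjoint_empty _)
  | compl t _ ih =>
    exact ih.symm.imp Disjoint.subset_compl_right Set.disjoint_compl_right_iff_subset.2
  | iUnion f _ ih =>
    by_cases h : ∃ i, A n ⊆ f i
    · obtain ⟨i, hi⟩ := h
      exact .inl (hi.trans (Set.subset_iUnion f i))
    · push Not at h
      exact .inr (Set.disjoint_iUnion_right.2 fun i => (ih i).resolve_left (h i))

lemma chainIncrement_of_mem (hanti : Antitone A) {k : ℕ} {ω : X} (hω : ω ∈ A (k + 1)) :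
    chainIncrement A d c k ω = d := by
  simp [chainIncrement, hω, hanti k.le_succ hω]

lemma chainProcess_zero : chainProcess A d c N 0 = 0 := by
  ext; simp [chainProcess]

lemma chainProcess_of_le {n : ℕ} (h : N ≤ n) :
    chainProcess A d c N n = chainProcess A d c N N := by
  ext; simp [chainProcess, h]

lemma chainProcess_succ_of_lt {n : ℕ} (hn : n < N) (ω : X) :
    chainProcess A d c N (n + 1) ω = chainProcess A d c N n ω + chainIncrement A d c n ω := by
  rw [chainProcess, chainProcess, min_eq_left hn, min_eq_left hn.le, Finset.sum_range_succ]

lemma chainProcess_self_of_mem (hanti : Antitone A) {ω : X} (hω : ω ∈ A N) :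
    chainProcess A d c N N ω = N * d := by
  rw [chainProcess, min_self, Finset.sum_congr rfl fun k hk => chainIncrement_of_mem hanti
    (hanti (Finset.mem_range.1 hk) hω)]
  simp

lemma stronglyMeasurable_chainIncrement {k n : ℕ} (hk : k < n) :
    StronglyMeasurable[chainFiltration A hA n] (chainIncrement A d c k) := by
  have hmeas : ∀ j ≤ n, MeasurableSet[chainFiltration A hA n] (A j) := fun j hj =>
    MeasurableSpace.measurableSet_generateFrom ⟨j, hj, rfl⟩
  exact ((measurable_const.indicator (hmeas _ hk)).sub
    (measurable_const.indicator (hmeas _ hk.le))).stronglyMeasurable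

lemma chainIncrement_sq_le (hanti : Antitone A) {k : ℕ} (hc₀ : 0 ≤ c k) (hcδ : c k ≤ δ) (ω : X) :
    chainIncrement A d c k ω ^ 2 ≤
      d ^ 2 + δ ^ 2 * ((A k).indicator 1 ω - (A (k + 1)).indicator 1 ω) := by
  by_cases h₁ : ω ∈ A (k + 1)
  · simp [chainIncrement_of_mem hanti h₁, h₁, hanti k.le_succ h₁]
  by_cases h₀ : ω ∈ A k
  · simp only [chainIncrement, Set.indicator_of_mem h₀, Set.indicator_of_notMem h₁, Pi.one_apply]
    nlinarith
  · simp [chainIncrement, h₀, h₁]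
    positivity

lemma tsum_sq_chainProcess_sub_le (hanti : Antitone A) (hc : ∀ k, 0 ≤ c k ∧ c k ≤ δ) (ω : X) :
    ∑' n, (chainProcess A d c N (n + 1) ω - chainProcess A d c N n ω) ^ 2 ≤
      N * d ^ 2 + δ ^ 2 := by
  set f : ℕ → ℝ := fun k => (A k).indicator 1 ω
  rw [tsum_eq_sum (s := Finset.range N) fun n hn => by
    have hn : N ≤ n := by simpa using hn
    rw [chainProcess_of_le (n := n + 1) (hn.trans n.le_succ), chainProcess_of_le hn, sub_self,
      sq, mul_zero]]
  calc ∑ n ∈ Finset.range N, (chainProcess A d c N (n + 1) ω - chainProcess A d c N n ω) ^ 2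
      = ∑ n ∈ Finset.range N, chainIncrement A d c n ω ^ 2 := Finset.sum_congr rfl fun n hn => by
        rw [chainProcess_succ_of_lt (Finset.mem_range.1 hn), add_sub_cancel_left]
    _ ≤ ∑ n ∈ Finset.range N, (d ^ 2 + δ ^ 2 * (f n - f (n + 1))) :=
        Finset.sum_le_sum fun n _ => chainIncrement_sq_le hanti (hc n).1 (hc n).2 ω
    _ = N * d ^ 2 + δ ^ 2 * (f 0 - f N) := by
        rw [Finset.sum_add_distrib, ← Finset.mul_sum, Finset.sum_range_sub']
        simp
    _ ≤ N * d ^ 2 + δ ^ 2 := by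
        have h₀ : f 0 ≤ 1 := Set.indicator_apply_le' (fun _ => le_rfl) fun _ => zero_le_one
        have hN : 0 ≤ f N := Set.indicator_nonneg (fun _ _ => zero_le_one) ω
        nlinarith [sq_nonneg δ]

variable {μ : Measure X} [IsFiniteMeasure μ]

lemma integrable_chainIncrement (hA : ∀ k, MeasurableSet (A k)) (k : ℕ) :
    Integrable (chainIncrement A d c k) μ :=
  ((integrable_const _).indicator (hA _)).sub ((integrable_const _).indicator (hA _))

lemma integrable_chainProcess (hA : ∀ k, MeasurableSet (A k)) (n : ℕ) :
    Integrable (chainProcess A d c N n) μ :=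
  integrable_finsetSum _ fun k _ => integrable_chainIncrement hA k

lemma setIntegral_chainIncrement_eq_zero (hanti : Antitone A) {k : ℕ}
    (hbal : (d + c k) * μ.real (A (k + 1)) = c k * μ.real (A k)) {s : Set X}
    (hs : MeasurableSet[chainFiltration A hA k] s) :
    ∫ ω in s, chainIncrement A d c k ω ∂μ = 0 := by
  have hint : ∀ j (b : ℝ), IntegrableOn ((A j).indicator fun _ => b) s μ :=
    fun j b => ((integrable_const b).indicator (hA j)).integrableOn
  unfold chainIncrement
  rw [integral_sub (hint _ _) (hint _ _), setIntegral_indicator (hA _),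
    setIntegral_indicator (hA _), setIntegral_const, setIntegral_const, smul_eq_mul, smul_eq_mul]
  rcases subset_or_disjoint_of_measurableSet_chainFiltration hanti hs with hsub | hdisj
  · rw [Set.inter_eq_right.2 hsub, Set.inter_eq_right.2 ((hanti k.le_succ).trans hsub),
      mul_comm, hbal, mul_comm, sub_self]
  · rw [(hdisj.symm.mono_right (hanti k.le_succ)).inter_eq, hdisj.symm.inter_eq]
    simp

lemma martingale_chainProcess (hanti : Antitone A)
    (hbal : ∀ k, (d + c k) * μ.real (A (k + 1)) = c k * μ.real (A k)) :
    Martingale (chainProcess A d c N) (chainFiltration A hA) μ := by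
  refine martingale_of_setIntegral_eq_succ (fun n => ?_) (fun n => ?_) fun n s hs => ?_
  · exact Finset.stronglyMeasurable_fun_sum _ fun k hk =>
      stronglyMeasurable_chainIncrement ((Finset.mem_range.1 hk).trans_le (min_le_left _ _))
  · exact integrable_chainProcess hA n
  rcases lt_or_ge n N with hn | hn
  · simp_rw [chainProcess_succ_of_lt hn]
    rw [integral_add (integrable_chainProcess hA n).integrableOn
      (integrable_chainIncrement hA n).integrableOn,
      setIntegral_chainIncrement_eq_zero hanti (hbal n) hs, add_zero]
  · rw [chainProcess_of_le hn, chainProcess_of_le (hn.trans n.le_succ)]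

end ChainMartingale

lemma exists_balancing_weight {d δ a b : ℝ} (hd : 0 < d) (hδ : 0 < δ) (ha : 0 < a)
    (hb : 0 ≤ b) (hba : b ≤ δ / (d + δ) * a) : ∃ c, 0 ≤ c ∧ c ≤ δ ∧ (d + c) * b = c * a := by
  have hba' : (d + δ) * b ≤ δ * a := by
    rw [div_mul_eq_mul_div, le_div_iff₀ (by positivity)] at hba
    linarith
  have hab : b < a := by nlinarith
  refine ⟨d * b / (a - b), by have := sub_pos.2 hab; positivity, ?_, ?_⟩
  · rw [div_le_iff₀ (sub_pos.2 hab)]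
    linarith
  · field_simp [(sub_pos.2 hab).ne']
    ring

lemma exp_neg_div_le_div_add {d δ : ℝ} (hd : 0 ≤ d) (hδ : 0 < δ) :
    Real.exp (-(d / δ)) ≤ δ / (d + δ) := by
  rw [Real.exp_neg, ← inv_div (d + δ)]
  refine inv_anti₀ (div_pos (add_pos_of_nonneg_of_pos hd hδ) hδ) ?_
  calc (d + δ) / δ = d / δ + 1 := by field_simp
    _ ≤ Real.exp (d / δ) := Real.add_one_le_exp _

theorem exists_martingale_sum_sq_le_of_measure_ge {X : Type*} {m : MeasurableSpace X}
    {μ : Measure X} [IsProbabilityMeasure μ] (hμ : μ.IsAtomless)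
    {δ d : ℝ} (hδ : 0 < δ) (hd : 0 < d) (N : ℕ) :
    ∃ (ℱ : Filtration ℕ m) (φ : ℕ → X → ℝ), ℱ 0 = ⊥ ∧ Martingale φ ℱ μ ∧
      (∀ n, N ≤ n → φ n = φ N) ∧ (∀ ω, ∑' n, (φ (n + 1) ω - φ n ω) ^ 2 ≤ N * d ^ 2 + δ ^ 2) ∧
      ENNReal.ofReal (Real.exp (-(N * d * (1 / δ + d)))) ≤ μ {ω | N * d ≤ φ N ω - φ 0 ω} := by
  set r := Real.exp (-(d / δ + d ^ 2))
  have hrq : r < δ / (d + δ) := by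
    calc r = Real.exp (-(d / δ)) * Real.exp (-(d ^ 2)) := by rw [← Real.exp_add, ← neg_add]
      _ < Real.exp (-(d / δ)) := mul_lt_of_lt_one_right (Real.exp_pos _)
        (Real.exp_lt_one_iff.2 (by nlinarith))
      _ ≤ δ / (d + δ) := exp_neg_div_le_div_add hd.le hδ
  obtain ⟨A, hA0, hanti, hA, hratio⟩ := hμ.exists_antitone_measureReal_ratio_mem_Icc
    (Real.exp_pos _) hrq ((div_le_one (by positivity)).2 (by linarith))
  have hlow : ∀ k, r ^ k ≤ μ.real (A k) := by
    intro k
    induction k with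
    | zero => simp [hA0]
    | succ k ih =>
      rw [pow_succ']
      exact (mul_le_mul_of_nonneg_left ih (Real.exp_pos _).le).trans (hratio k).1
  choose c hc₀ hcδ hbal using fun k => exists_balancing_weight hd hδ
    ((pow_pos (Real.exp_pos _) k).trans_le (hlow k)) measureReal_nonneg (hratio k).2
  refine ⟨chainFiltration A hA, chainProcess A d c N, chainFiltration_zero hA0,
    martingale_chainProcess hanti hbal, fun n => chainProcess_of_le,
    tsum_sq_chainProcess_sub_le hanti fun k => ⟨hc₀ k, hcδ k⟩, ?_⟩
  calc ENNReal.ofReal (Real.exp (-(N * d * (1 / δ + d)))) = ENNReal.ofReal (r ^ N) := by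
        rw [← Real.exp_nat_mul]; ring_nf
    _ ≤ ENNReal.ofReal (μ.real (A N)) := ENNReal.ofReal_le_ofReal (hlow N)
    _ = μ (A N) := ofReal_measureReal
    _ ≤ μ {ω | N * d ≤ chainProcess A d c N N ω - chainProcess A d c N 0 ω} :=
        measure_mono fun ω hω => by simp [chainProcess_self_of_mem hanti hω, chainProcess_zero]

lemma exists_tail_parameters {c₁ : ℝ} (hc₁ : 1 < c₁) (c₂ : ℝ) :
    ∃ (δ d : ℝ) (N : ℕ), 0 < δ ∧ 0 < d ∧ 0 < N ∧ N * d ^ 2 + δ ^ 2 ≤ 1 ∧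
      c₂ * Real.exp (-(c₁ * (N * d))) < Real.exp (-(N * d * (1 / δ + d))) := by
  have hc₁₀ : 0 < c₁ := by linarith
  obtain ⟨δ, hc₁δ, hδ₁⟩ := exists_between ((div_lt_one hc₁₀).2 hc₁)
  have hδ : 0 < δ := (one_div_pos.2 hc₁₀).trans hc₁δ
  have hδc₁ : 1 / δ < c₁ := (one_div_lt hc₁₀ hδ).1 hc₁δ
  obtain ⟨γ, hγ, hγc₁⟩ : ∃ γ, 0 < γ ∧ 1 / δ + 2 * γ = c₁ :=
    ⟨(c₁ - 1 / δ) / 2, by linarith, by ring⟩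
  obtain ⟨lam, hlam, hlamγ⟩ : ∃ lam, 0 < lam ∧ c₂ < lam * γ := by
    refine ⟨|c₂| / γ + 1, by positivity, ?_⟩
    rw [add_mul, div_mul_cancel₀ _ hγ.ne']
    linarith [le_abs_self c₂]
  obtain ⟨N, hN⟩ := exists_nat_gt (max (lam / γ) (lam ^ 2 / (1 - δ ^ 2)))
  have hNγ : lam < N * γ := (div_lt_iff₀ hγ).1 ((le_max_left _ _).trans_lt hN)
  have hNδ : lam ^ 2 < N * (1 - δ ^ 2) :=
    (div_lt_iff₀ (by nlinarith)).1 ((le_max_right _ _).trans_lt hN)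
  have hN₀ : (0 : ℝ) < N := by nlinarith
  obtain ⟨d, hd, hNd⟩ : ∃ d, 0 < d ∧ N * d = lam :=
    ⟨lam / N, by positivity, mul_div_cancel₀ _ hN₀.ne'⟩
  have hdγ : d ≤ γ := by nlinarith
  refine ⟨δ, d, N, hδ, hd, by exact_mod_cast hN₀, by nlinarith, ?_⟩
  have hx : c₂ < Real.exp (lam * (c₁ - 1 / δ - d)) := by
    have : lam * γ ≤ lam * (c₁ - 1 / δ - d) := mul_le_mul_of_nonneg_left (by linarith) hlam.le
    linarith [Real.add_one_le_exp (lam * (c₁ - 1 / δ - d))]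
  calc c₂ * Real.exp (-(c₁ * (N * d)))
      < Real.exp (lam * (c₁ - 1 / δ - d)) * Real.exp (-(c₁ * (N * d))) := by gcongr
    _ = Real.exp (-(N * d * (1 / δ + d))) := by rw [← Real.exp_add, hNd]; ring_nf

theorem tail_estimate_rate_optimal_general
    {X : Type*} {m : MeasurableSpace X} {μ : Measure X} [IsProbabilityMeasure μ]
    (hatomless : ∀ s : Set X, MeasurableSet s → 0 < μ s →
      ∃ t : Set X, t ⊆ s ∧ MeasurableSet t ∧ 0 < μ t ∧ μ t < μ s)
    (c₁ c₂ : ℝ) (hc₁ : 1 < c₁) :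
    ∃ (lam : ℝ) (ℱ : Filtration ℕ m) (φ : ℕ → X → ℝ) (N : ℕ),
      0 < lam ∧ ℱ 0 = ⊥ ∧ Martingale φ ℱ μ ∧ (∀ n, N ≤ n → φ n = φ N) ∧
      (∀ᵐ ω ∂μ, Real.sqrt (∑' n, (φ (n + 1) ω - φ n ω) ^ 2) ≤ 1) ∧
      ENNReal.ofReal (c₂ * Real.exp (-(c₁ * lam))) < μ {ω | lam ≤ φ N ω - φ 0 ω} := by
  obtain ⟨δ, d, N, hδ, hd, hN, hsq, hexp⟩ := exists_tail_parameters hc₁ c₂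
  obtain ⟨ℱ, φ, hℱ, hmart, hsimple, hS, htail⟩ :=
    exists_martingale_sum_sq_le_of_measure_ge (μ := μ) hatomless hδ hd N
  refine ⟨N * d, ℱ, φ, N, by positivity, hℱ, hmart, hsimple,
    ae_of_all μ fun ω => Real.sqrt_le_one.2 ((hS ω).trans hsq), ?_⟩
  exact ((ENNReal.ofReal_lt_ofReal_iff (Real.exp_pos _)).2 hexp).trans_le htail

/-- The exponential rate `c₁ = 1` in the subexponential tail estimate
is optimal: for every `c₁ > 1`, `c₂ > 0`, and every atomless probability space there
exist `λ > 0` and a simple martingale with `Sφ ≤ 1` a.s. such that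
`P(φ_∞ − φ_0 ≥ λ) > c₂·e^{−c₁·λ}`. -/
theorem tail_estimate_rate_optimal
    {X : Type*} {m : MeasurableSpace X} {μ : Measure X} [IsProbabilityMeasure μ]
    (hatomless : ∀ s : Set X, MeasurableSet s → 0 < μ s →
      ∃ t : Set X, t ⊆ s ∧ MeasurableSet t ∧ 0 < μ t ∧ μ t < μ s)
    (c₁ c₂ : ℝ) (hc₁ : 1 < c₁) (hc₂ : 0 < c₂) :
    ∃ (lam : ℝ) (ℱ : Filtration ℕ m) (φ : ℕ → X → ℝ) (N : ℕ),
      0 < lam ∧ ℱ 0 = ⊥ ∧ Martingale φ ℱ μ ∧ (∀ n, N ≤ n → φ n = φ N) ∧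
      (∀ᵐ ω ∂μ, Real.sqrt (∑' n, (φ (n + 1) ω - φ n ω) ^ 2) ≤ 1) ∧
      ENNReal.ofReal (c₂ * Real.exp (-(c₁ * lam))) < μ {ω | lam ≤ φ N ω - φ 0 ω} :=
  tail_estimate_rate_optimal_general hatomless c₁ c₂ hc₁
end

section
/- Characterization of the natural domain Ω: (a) If z ∈ [0,1] and φ is a simple martingale on a probability space with F_0 trivial such that φ_0 = x, E φ_∞² = y, and (Sφ)² ≤ 1 − z² almost surely, then x² ≤ y ≤ 1 − z² + x²; moreover E φ_∞² − (E φ_∞)² = E (Sφ)². (b) Conversely, on any atomless probability space, for every (x, y, z) ∈ Ω = {(x,y,z) ∈ ℝ³ : x² ≤ y ≤ 1 − z² + x², z ∈ [0,1]} there exist a filtration with F_0 trivial and a simple martingale φ adapted to it with φ_0 = x, E φ_∞² = y, and (Sφ)² ≤ 1 − z² almost surely. -/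
/-!
(a) Bounded square function forces bounded increments, so every `φ n` is in `L²`, and the
increments of an `L²` martingale are orthogonal: `E φₙ₊₁² = E φₙ² + E (φₙ₊₁ - φₙ)²`. Summing,
`E φ_∞² = x² + E (Sφ)²`, and `0 ≤ E (Sφ)² ≤ 1 - z²` gives both inequalities.

(b) One step suffices. An atomless space has a set `A` of measure `1/2` (greedy exhaustion), and
the fair coin flip `φ₁ = x ± √(y - x²)` on `A`, `Aᶜ` has `(Sφ)² ≡ y - x² ≤ 1 - z²`, hence
`E φ₁² = x² + (y - x²) = y` by (a).
-/

open MeasureTheory Filter Set Finset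
open scoped ENNReal

lemma exists_forall_le_two_mul {α : Type*} {p : α → Prop} {f : α → ℝ≥0∞} {a₀ : α} {b : ℝ≥0∞}
    (hb : b ≠ ∞) (ha₀ : p a₀) (hf : ∀ a, p a → f a ≤ b) :
    ∃ a, p a ∧ ∀ a', p a' → f a' ≤ 2 * f a := by
  set s := ⨆ (a) (_ : p a), f a
  have hle : ∀ a, p a → f a ≤ s := fun a ha => le_iSup₂ (f := fun a (_ : p a) => f a) a ha
  by_cases hs : s = 0
  · exact ⟨a₀, ha₀, fun a ha => ((hle a ha).trans hs.le).trans zero_le⟩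
  have hs_top : s ≠ ∞ := ne_top_of_le_ne_top hb (iSup₂_le hf)
  obtain ⟨a, ha, hlt⟩ := lt_biSup_iff.mp (ENNReal.half_lt_self hs hs_top)
  refine ⟨a, ha, fun a' ha' => ?_⟩
  calc f a' ≤ s := hle a' ha'
    _ = 2 * (s / 2) := (ENNReal.mul_div_cancel two_ne_zero ENNReal.ofNat_ne_top).symm
    _ ≤ 2 * f a := by gcongr; exact hlt.le

namespace MeasureTheory

variable {X : Type*} {m : MeasurableSpace X} {μ : Measure X}

/-- The splitting property of the paper's atomless spaces; Mathlib's `NoAtoms` only asks that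
singletons be null, which is weaker. -/
def Measure.IsAtomless_s8 (μ : Measure X) : Prop :=
  ∀ s : Set X, MeasurableSet s → 0 < μ s →
    ∃ t : Set X, t ⊆ s ∧ MeasurableSet t ∧ 0 < μ t ∧ μ t < μ s

/-- Greedy exhaustion: at each step add, outside the current set, a set of at least half the
largest measure that still fits under `c`. -/
lemma exists_greedy_seq_measure_le {c : ℝ≥0∞} (hc : c ≠ ∞) :
    ∃ B : ℕ → Set X, Monotone B ∧ (∀ n, MeasurableSet (B n)) ∧ (∀ n, μ (B n) ≤ c) ∧
      ∀ n u, MeasurableSet u → u ⊆ (B n)ᶜ → μ u ≤ c - μ (B n) →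
        2 * μ (B n) + μ u ≤ 2 * μ (B (n + 1)) := by
  have step (A : Set X) := exists_forall_le_two_mul (f := μ)
    (p := fun t => MeasurableSet t ∧ t ⊆ Aᶜ ∧ μ t ≤ c - μ A) hc
    ⟨.empty, empty_subset _, by simp⟩ fun t ht => ht.2.2.trans tsub_le_self
  choose T hT hT_max using step
  let B : ℕ → Set X := fun n => Nat.rec ∅ (fun _ A => A ∪ T A) n
  have hμB_succ (n : ℕ) : μ (B (n + 1)) = μ (B n) + μ (T (B n)) :=
    measure_union (subset_compl_iff_disjoint_left.mp (hT _).2.1) (hT _).1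
  refine ⟨B, monotone_nat_of_le_succ fun n => subset_union_left, fun n => ?_, fun n => ?_,
    fun n u hu huB huc => ?_⟩
  · induction n with
    | zero => exact .empty
    | succ n ih => exact ih.union (hT _).1
  · induction n with
    | zero => simp [B]
    | succ n ih =>
      rw [hμB_succ]
      calc μ (B n) + μ (T (B n)) ≤ μ (B n) + (c - μ (B n)) := by gcongr; exact (hT _).2.2
        _ = c := add_tsub_cancel_of_le ih
  · rw [hμB_succ, mul_add]
    gcongr
    exact hT_max _ u ⟨hu, huB, huc⟩

namespace Measure.IsAtomless_s8

variable [IsFiniteMeasure μ] {s : Set X}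

lemma exists_subset_measure_le_half (hμ : μ.IsAtomless_s8) (hs : MeasurableSet s)
    (hs₀ : 0 < μ s) : ∃ t ⊆ s, MeasurableSet t ∧ 0 < μ t ∧ μ t ≤ μ s / 2 := by
  obtain ⟨u, hus, hu, hu₀, hlt⟩ := hμ s hs hs₀
  have hdiff : μ (s \ u) = μ s - μ u :=
    measure_sdiff hus hu.nullMeasurableSet (measure_ne_top μ u)
  by_cases hle : μ u ≤ μ s / 2
  · exact ⟨u, hus, hu, hu₀, hle⟩
  refine ⟨s \ u, sdiff_subset, hs.diff hu, by rw [hdiff]; exact tsub_pos_of_lt hlt, ?_⟩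
  calc μ (s \ u) = μ s - μ u := hdiff
    _ ≤ μ s - μ s / 2 := tsub_le_tsub_left (not_le.mp hle).le _
    _ = μ s / 2 := ENNReal.sub_half (measure_ne_top μ s)

lemma exists_subset_measure_pos_lt (hμ : μ.IsAtomless_s8) (hs : MeasurableSet s)
    (hs₀ : 0 < μ s) {ε : ℝ≥0∞} (hε : ε ≠ 0) : ∃ t ⊆ s, MeasurableSet t ∧ 0 < μ t ∧ μ t < ε := by
  have hhalve (n : ℕ) : ∃ t ⊆ s, MeasurableSet t ∧ 0 < μ t ∧ μ t ≤ μ s * 2⁻¹ ^ n := by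
    induction n with
    | zero => exact ⟨s, subset_rfl, hs, hs₀, by simp⟩
    | succ n ih =>
      obtain ⟨t, hts, ht, ht₀, htle⟩ := ih
      obtain ⟨u, hut, hu, hu₀, hule⟩ := hμ.exists_subset_measure_le_half ht ht₀
      refine ⟨u, hut.trans hts, hu, hu₀, ?_⟩
      calc μ u ≤ μ t / 2 := hule
        _ ≤ μ s * 2⁻¹ ^ n / 2 := by gcongr
        _ = μ s * 2⁻¹ ^ (n + 1) := by rw [pow_succ, ← mul_assoc, ← div_eq_mul_inv]
  have hlim : Tendsto (fun n : ℕ => μ s * 2⁻¹ ^ n) atTop (nhds 0) := by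
    simpa using ENNReal.Tendsto.const_mul
      (ENNReal.tendsto_pow_atTop_nhds_zero_iff.mpr (by norm_num)) (.inr (measure_ne_top μ s))
  obtain ⟨n, hn⟩ := (hlim.eventually (gt_mem_nhds (pos_iff_ne_zero.mpr hε))).exists
  obtain ⟨t, hts, ht, ht₀, htle⟩ := hhalve n
  exact ⟨t, hts, ht, ht₀, htle.trans_lt hn⟩

lemma exists_measure_eq (hμ : μ.IsAtomless_s8) {c : ℝ≥0∞} (hc : c ≤ μ univ) :
    ∃ A, MeasurableSet A ∧ μ A = c := by
  obtain ⟨B, hB_mono, hB, hBc, hB_greedy⟩ :=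
    exists_greedy_seq_measure_le (μ := μ) (hc.trans_lt (measure_lt_top μ univ)).ne
  set A := ⋃ n, B n
  have hA : MeasurableSet A := .iUnion hB
  refine ⟨A, hA, le_antisymm ?_ ?_⟩
  · rw [hB_mono.measure_iUnion]
    exact iSup_le hBc
  by_contra! hlt
  have hAc : 0 < μ Aᶜ := by
    rw [measure_compl hA (measure_ne_top μ A)]
    exact tsub_pos_of_lt (hlt.trans_le hc)
  -- a fixed positive set fits at every stage, so the greedy steps cannot become small
  obtain ⟨t, htA, ht, ht₀, htc⟩ :=
    hμ.exists_subset_measure_pos_lt hA.compl hAc (tsub_pos_of_lt hlt).ne'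
  have hgrow (n : ℕ) : n * μ t ≤ 2 * μ (B n) := by
    induction n with
    | zero => simp
    | succ n ih =>
      have hBA : B n ⊆ A := subset_iUnion B n
      calc ((n + 1 : ℕ) : ℝ≥0∞) * μ t = n * μ t + μ t := by push_cast; ring
        _ ≤ 2 * μ (B n) + μ t := by gcongr
        _ ≤ 2 * μ (B (n + 1)) := hB_greedy n t ht (htA.trans (compl_subset_compl.mpr hBA))
            (htc.le.trans (tsub_le_tsub_left (measure_mono hBA) c))
  obtain ⟨n, hn⟩ := ENNReal.exists_nat_mul_gt ht₀.ne'
    (ENNReal.mul_ne_top (a := 2) (by norm_num) (hc.trans_lt (measure_lt_top μ univ)).ne)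
  exact (hn.trans_le (hgrow n)).not_ge (by gcongr; exact hBc n)

end Measure.IsAtomless_s8

/-- `(Sφ)²`, the square of the square function of `φ`. -/
noncomputable def quadraticVariation (φ : ℕ → X → ℝ) (ω : X) : ℝ :=
  ∑' n, (φ (n + 1) ω - φ n ω) ^ 2

section SimpleMartingale

variable {φ : ℕ → X → ℝ} {N : ℕ}

lemma quadraticVariation_nonneg (φ : ℕ → X → ℝ) (ω : X) : 0 ≤ quadraticVariation φ ω :=
  tsum_nonneg fun _ => sq_nonneg _

lemma sq_sub_eq_zero_of_le (hN : ∀ n, N ≤ n → φ n = φ N) {n : ℕ} (hn : N ≤ n) (ω : X) :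
    (φ (n + 1) ω - φ n ω) ^ 2 = 0 := by
  rw [hN (n + 1) (by omega), hN n hn, sub_self, sq, zero_mul]

lemma summable_sq_sub (hN : ∀ n, N ≤ n → φ n = φ N) (ω : X) :
    Summable fun n => (φ (n + 1) ω - φ n ω) ^ 2 :=
  summable_of_ne_finset_zero (s := range N) fun n hn =>
    sq_sub_eq_zero_of_le hN (by simpa using hn) ω

lemma quadraticVariation_eq_sum_range (hN : ∀ n, N ≤ n → φ n = φ N) (ω : X) :
    quadraticVariation φ ω = ∑ n ∈ range N, (φ (n + 1) ω - φ n ω) ^ 2 :=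
  tsum_eq_sum fun n hn => sq_sub_eq_zero_of_le hN (by simpa using hn) ω

lemma sq_sub_le_quadraticVariation (hN : ∀ n, N ≤ n → φ n = φ N) (n : ℕ) (ω : X) :
    (φ (n + 1) ω - φ n ω) ^ 2 ≤ quadraticVariation φ ω :=
  (summable_sq_sub hN ω).le_tsum n fun _ _ => sq_nonneg _

lemma memLp_two_of_ae_sq_sub_le [IsFiniteMeasure μ] {C : ℝ} (h₀ : MemLp (φ 0) 2 μ)
    (hφ : ∀ n, AEStronglyMeasurable (φ n) μ)
    (hC : ∀ᵐ ω ∂μ, ∀ n, (φ (n + 1) ω - φ n ω) ^ 2 ≤ C) (n : ℕ) : MemLp (φ n) 2 μ := by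
  induction n with
  | zero => exact h₀
  | succ n ih =>
    have hd : MemLp (φ (n + 1) - φ n) 2 μ :=
      MemLp.of_bound ((hφ _).sub (hφ _)) √C <| by
        filter_upwards [hC] with ω hω
        exact Real.abs_le_sqrt (hω n)
    simpa using ih.add hd

end SimpleMartingale

namespace Martingale

variable [IsFiniteMeasure μ] {ℱ : Filtration ℕ m} {φ : ℕ → X → ℝ}

lemma integral_mul_sub_eq_zero_s8 (hφ : Martingale φ ℱ μ) {n : ℕ} (hn : MemLp (φ n) 2 μ)
    (hn' : MemLp (φ (n + 1)) 2 μ) : ∫ ω, φ n ω * (φ (n + 1) ω - φ n ω) ∂μ = 0 := by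
  have hd : Integrable (φ (n + 1) - φ n) μ := (hφ.integrable _).sub (hφ.integrable _)
  have hcond : μ[φ (n + 1) - φ n | ℱ n] =ᵐ[μ] 0 := by
    filter_upwards [condExp_sub (hφ.integrable (n + 1)) (hφ.integrable n) (ℱ n),
      hφ.condExp_ae_eq n.le_succ] with ω h h'
    rw [h, Pi.sub_apply, h', condExp_of_stronglyMeasurable (ℱ.le n) (hφ.stronglyAdapted n)
      (hφ.integrable n), sub_self, Pi.zero_apply]
  calc ∫ ω, φ n ω * (φ (n + 1) ω - φ n ω) ∂μ
      = ∫ ω, μ[φ n * (φ (n + 1) - φ n) | ℱ n] ω ∂μ := (integral_condExp (ℱ.le n)).symm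
    _ = ∫ ω, (φ n * μ[φ (n + 1) - φ n | ℱ n]) ω ∂μ := integral_congr_ae <|
        condExp_mul_of_stronglyMeasurable_left (hφ.stronglyAdapted n)
          (hn.integrable_mul (hn'.sub hn)) hd
    _ = ∫ _, (0 : ℝ) ∂μ := integral_congr_ae (hcond.mono fun ω h => by simp [h])
    _ = 0 := integral_zero _ _

lemma integral_sq_succ (hφ : Martingale φ ℱ μ) {n : ℕ} (hn : MemLp (φ n) 2 μ)
    (hn' : MemLp (φ (n + 1)) 2 μ) :
    ∫ ω, φ (n + 1) ω ^ 2 ∂μ = ∫ ω, φ n ω ^ 2 ∂μ + ∫ ω, (φ (n + 1) ω - φ n ω) ^ 2 ∂μ := by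
  have hsq : Integrable (fun ω => (φ (n + 1) ω - φ n ω) ^ 2) μ := (hn'.sub hn).integrable_sq
  have hcross : Integrable (fun ω => 2 * (φ n ω * (φ (n + 1) ω - φ n ω))) μ :=
    (hn.integrable_mul (hn'.sub hn)).const_mul 2
  have hsum : Integrable (fun ω => φ n ω ^ 2 + 2 * (φ n ω * (φ (n + 1) ω - φ n ω))) μ :=
    hn.integrable_sq.add hcross
  have hexpand : (fun ω => φ (n + 1) ω ^ 2) =
      fun ω => φ n ω ^ 2 + 2 * (φ n ω * (φ (n + 1) ω - φ n ω)) + (φ (n + 1) ω - φ n ω) ^ 2 := by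
    ext ω
    ring
  rw [hexpand, integral_add hsum hsq, integral_add hn.integrable_sq hcross, integral_const_mul,
    hφ.integral_mul_sub_eq_zero_s8 hn hn', mul_zero, add_zero]

lemma integral_sq_eq_add_sum (hφ : Martingale φ ℱ μ) (hL2 : ∀ n, MemLp (φ n) 2 μ) (n : ℕ) :
    ∫ ω, φ n ω ^ 2 ∂μ =
      ∫ ω, φ 0 ω ^ 2 ∂μ + ∑ i ∈ range n, ∫ ω, (φ (i + 1) ω - φ i ω) ^ 2 ∂μ := by
  induction n with
  | zero => simp
  | succ n ih => rw [hφ.integral_sq_succ (hL2 n) (hL2 (n + 1)), ih, sum_range_succ, add_assoc]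

variable [IsProbabilityMeasure μ] {N : ℕ} {x C : ℝ}

lemma integral_eq_of_zero_eq_const (hφ : Martingale φ ℱ μ) (h₀ : φ 0 = fun _ => x) (n : ℕ) :
    ∫ ω, φ n ω ∂μ = x := by
  simpa [h₀] using (hφ.setIntegral_eq n.zero_le MeasurableSet.univ).symm

lemma integral_sq_eq_sq_add_integral_quadraticVariation (hφ : Martingale φ ℱ μ)
    (hN : ∀ n, N ≤ n → φ n = φ N) (h₀ : φ 0 = fun _ => x)
    (hS : ∀ᵐ ω ∂μ, quadraticVariation φ ω ≤ C) :
    ∫ ω, φ N ω ^ 2 ∂μ = x ^ 2 + ∫ ω, quadraticVariation φ ω ∂μ := by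
  have hL2 : ∀ n, MemLp (φ n) 2 μ :=
    memLp_two_of_ae_sq_sub_le (h₀ ▸ memLp_const x) (fun n => (hφ.integrable n).1) <| by
      filter_upwards [hS] with ω hω n
      exact (sq_sub_le_quadraticVariation hN n ω).trans hω
  rw [hφ.integral_sq_eq_add_sum hL2 N, h₀, integral_const, probReal_univ, one_smul,
    integral_congr_ae (ae_of_all _ (quadraticVariation_eq_sum_range hN)),
    integral_finsetSum (f := fun i ω => (φ (i + 1) ω - φ i ω) ^ 2) _
      fun i _ => ((hL2 (i + 1)).sub (hL2 i)).integrable_sq]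

end Martingale

def oneStepFiltration (m : MeasurableSpace X) : Filtration ℕ m where
  seq n := if n = 0 then ⊥ else m
  mono' i j hij := by
    by_cases hi : i = 0
    · simp [hi]
    · simp [hi, show j ≠ 0 by omega]
  le' n := by split_ifs <;> simp

lemma exists_martingale_oneStepFiltration [IsProbabilityMeasure μ] {f : X → ℝ}
    (hf : StronglyMeasurable f) (hfi : Integrable f μ) :
    ∃ φ : ℕ → X → ℝ, Martingale φ (oneStepFiltration m) μ ∧ (∀ n, 1 ≤ n → φ n = φ 1) ∧
      φ 0 = (fun _ => ∫ ω, f ω ∂μ) ∧ ∀ ω, quadraticVariation φ ω = (f ω - ∫ ω, f ω ∂μ) ^ 2 := by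
  set φ : ℕ → X → ℝ := fun n => μ[f | oneStepFiltration m n]
  have hφ₀ : φ 0 = fun _ => ∫ ω, f ω ∂μ := by
    change μ[f | ⊥] = _
    simp
  have hφ_succ (n : ℕ) : φ (n + 1) = f :=
    condExp_of_stronglyMeasurable ((oneStepFiltration m).le (n + 1)) hf hfi
  have hN (n : ℕ) (hn : 1 ≤ n) : φ n = φ 1 := by
    obtain ⟨k, rfl⟩ := Nat.exists_eq_add_of_le' hn
    rw [hφ_succ, hφ_succ]
  refine ⟨φ, martingale_condExp _ _ _, hN, hφ₀, fun ω => ?_⟩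
  rw [quadraticVariation_eq_sum_range hN, sum_range_one, hφ_succ, hφ₀]

/-- A fair coin flip with values `x ± a`. -/
lemma Measure.IsAtomless_s8.exists_integral_eq_forall_sq_sub_eq [IsProbabilityMeasure μ]
    (hμ : μ.IsAtomless_s8) (x a : ℝ) :
    ∃ f : X → ℝ, StronglyMeasurable f ∧ Integrable f μ ∧ ∫ ω, f ω ∂μ = x ∧
      ∀ ω, (f ω - x) ^ 2 = a ^ 2 := by
  classical
  obtain ⟨A, hA, hμA⟩ := hμ.exists_measure_eq (c := 1 / 2) (by simp)
  have hμA_real : μ.real A = 1 / 2 := by simp [measureReal_def, hμA]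
  refine ⟨A.piecewise (fun _ => x + a) (fun _ => x - a),
    (measurable_const.piecewise hA measurable_const).stronglyMeasurable,
    .piecewise hA (integrable_const _).integrableOn (integrable_const _).integrableOn, ?_,
    fun ω => ?_⟩
  · rw [integral_piecewise hA (integrable_const _).integrableOn (integrable_const _).integrableOn,
      setIntegral_const, setIntegral_const, probReal_compl_eq_one_sub hA, hμA_real,
      smul_eq_mul, smul_eq_mul]
    ring
  · by_cases hω : ω ∈ A <;> simp [hω]

end MeasureTheory

/-- Characterization of the natural domain
`Ω = {(x,y,z) : x² ≤ y ≤ 1 − z² + x², z ∈ [0,1]}`.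
(a) If a simple martingale has `φ₀ = x`, `E φ_∞² = y` and `(Sφ)² ≤ 1 − z²` a.s. with
`z ∈ [0,1]`, then `x² ≤ y ≤ 1 − z² + x²` and `E φ_∞² − (E φ_∞)² = E (Sφ)²`.
(b) Conversely, on an atomless probability space every point of `Ω` is attained by
such a simple martingale. -/
theorem natural_domain_characterization
    {X : Type*} {m : MeasurableSpace X} {μ : Measure X} [IsProbabilityMeasure μ] :
    (∀ (ℱ : Filtration ℕ m), ℱ 0 = ⊥ →
      ∀ (φ : ℕ → X → ℝ), Martingale φ ℱ μ →
      ∀ N : ℕ, (∀ n, N ≤ n → φ n = φ N) →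
      ∀ x y z : ℝ, 0 ≤ z → z ≤ 1 →
        φ 0 = (fun _ => x) →
        (∫ ω, (φ N ω) ^ 2 ∂μ) = y →
        (∀ᵐ ω ∂μ, (∑' n, (φ (n + 1) ω - φ n ω) ^ 2) ≤ 1 - z ^ 2) →
        (x ^ 2 ≤ y ∧ y ≤ 1 - z ^ 2 + x ^ 2 ∧
          (∫ ω, (φ N ω) ^ 2 ∂μ) - (∫ ω, φ N ω ∂μ) ^ 2 =
            ∫ ω, (∑' n, (φ (n + 1) ω - φ n ω) ^ 2) ∂μ))
    ∧
    ((∀ s : Set X, MeasurableSet s → 0 < μ s →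
        ∃ t : Set X, t ⊆ s ∧ MeasurableSet t ∧ 0 < μ t ∧ μ t < μ s) →
      ∀ x y z : ℝ, x ^ 2 ≤ y → y ≤ 1 - z ^ 2 + x ^ 2 → 0 ≤ z → z ≤ 1 →
        ∃ (ℱ : Filtration ℕ m) (φ : ℕ → X → ℝ) (N : ℕ),
          ℱ 0 = ⊥ ∧ Martingale φ ℱ μ ∧ (∀ n, N ≤ n → φ n = φ N) ∧
          φ 0 = (fun _ => x) ∧
          (∫ ω, (φ N ω) ^ 2 ∂μ) = y ∧
          (∀ᵐ ω ∂μ, (∑' n, (φ (n + 1) ω - φ n ω) ^ 2) ≤ 1 - z ^ 2)) := by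
  constructor
  · intro ℱ _ φ hφ N hN x y z _ _ h₀ hy hS
    have hvar := hφ.integral_sq_eq_sq_add_integral_quadraticVariation hN h₀ hS
    have hS_nonneg : 0 ≤ ∫ ω, quadraticVariation φ ω ∂μ :=
      integral_nonneg (quadraticVariation_nonneg φ)
    have hS_le : ∫ ω, quadraticVariation φ ω ∂μ ≤ 1 - z ^ 2 := by
      have := integral_mono_of_nonneg (f := quadraticVariation φ)
        (ae_of_all _ (quadraticVariation_nonneg φ)) (integrable_const _) hS
      rwa [integral_const, probReal_univ, one_smul] at this
    refine ⟨by linarith, by linarith, ?_⟩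
    rw [hvar, hφ.integral_eq_of_zero_eq_const h₀]
    exact add_sub_cancel_left _ _
  · rintro (hμ : μ.IsAtomless_s8) x y z hxy _ _ _
    obtain ⟨f, hf, hfi, hf_int, hf_sq⟩ := hμ.exists_integral_eq_forall_sq_sub_eq x √(y - x ^ 2)
    obtain ⟨φ, hφ, hN, h₀, hQ⟩ := exists_martingale_oneStepFiltration hf hfi
    rw [hf_int] at h₀ hQ
    have hQ_eq (ω : X) : quadraticVariation φ ω = y - x ^ 2 := by
      rw [hQ, hf_sq, Real.sq_sqrt (by linarith)]
    refine ⟨oneStepFiltration m, φ, 1, rfl, hφ, hN, h₀, ?_, ae_of_all _ fun ω => ?_⟩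
    · rw [hφ.integral_sq_eq_sq_add_integral_quadraticVariation hN h₀
        (ae_of_all _ fun ω => (hQ_eq ω).le)]
      simp [hQ_eq]
    · change quadraticVariation φ ω ≤ _
      linarith [hQ_eq ω]
end

section
/- Let Ω = {(x,y,z) ∈ ℝ³ : x² ≤ y ≤ 1 − z² + x², z ∈ [0,1]}. Suppose (x,y,z) ∈ Ω, the points (x_j, y_j, z_j) ∈ Ω for j = 1,…,N, and the weights α_j ∈ [0,1] satisfy Σ_j α_j = 1, Σ_j α_j x_j = x, Σ_j α_j y_j = y, and z_j² = z² + (x_j − x)² for every j. Then the convex hull of the planar points {(x_j, y_j) : j = 1,…,N} is contained in the parabolic strip ω_{√(1−z²)} = {(u,v) ∈ ℝ² : u² ≤ v ≤ u² + 1 − z²}. -/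
open MeasureTheory Filter

/-- If a point `(x,y,z)` of `Ω` is split into points
`(x_j,y_j,z_j) ∈ Ω` according to the splitting rules, then the convex hull of the
planar points `(x_j,y_j)` lies in the parabolic strip `ω_{√(1−z²)}`. -/
theorem convexHull_subset_parabolic_strip
    (x y z : ℝ)
    (hΩ : x ^ 2 ≤ y ∧ y ≤ 1 - z ^ 2 + x ^ 2 ∧ 0 ≤ z ∧ z ≤ 1)
    (N : ℕ) (α xs ys zs : Fin N → ℝ)
    (hα : ∀ j, 0 ≤ α j ∧ α j ≤ 1) (hsum : (∑ j, α j) = 1)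
    (hx : (∑ j, α j * xs j) = x) (hy : (∑ j, α j * ys j) = y)
    (hΩj : ∀ j, (xs j) ^ 2 ≤ ys j ∧ ys j ≤ 1 - (zs j) ^ 2 + (xs j) ^ 2 ∧
      0 ≤ zs j ∧ zs j ≤ 1)
    (hz : ∀ j, (zs j) ^ 2 = z ^ 2 + (xs j - x) ^ 2) :
    convexHull ℝ {p : ℝ × ℝ | ∃ j, p = (xs j, ys j)} ⊆
      {p : ℝ × ℝ | p.1 ^ 2 ≤ p.2 ∧ p.2 ≤ p.1 ^ 2 + (1 - z ^ 2)} := by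
  have hconv : Convex ℝ {p : ℝ × ℝ |
      p.1 ^ 2 ≤ p.2 ∧ p.2 ≤ 2 * x * p.1 - x ^ 2 + 1 - z ^ 2} := by
    rintro p ⟨hp1, hp2⟩ q ⟨hq1, hq2⟩ a b ha hb hab
    constructor
    · show (a * p.1 + b * q.1) ^ 2 ≤ a * p.2 + b * q.2
      nlinarith [sq_nonneg (p.1 - q.1), mul_nonneg ha hb, sq_nonneg p.1, sq_nonneg q.1,
        mul_le_mul_of_nonneg_left hp1 ha, mul_le_mul_of_nonneg_left hq1 hb]
    · show a * p.2 + b * q.2 ≤ 2 * x * (a * p.1 + b * q.1) - x ^ 2 + 1 - z ^ 2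
      nlinarith [mul_le_mul_of_nonneg_left hp2 ha, mul_le_mul_of_nonneg_left hq2 hb]
  refine (convexHull_min ?_ hconv).trans ?_
  · rintro p ⟨j, rfl⟩
    refine ⟨(hΩj j).1, ?_⟩
    have h1 := (hΩj j).2.1
    have h2 := hz j
    show ys j ≤ 2 * x * xs j - x ^ 2 + 1 - z ^ 2
    nlinarith
  · rintro p ⟨hp1, hp2⟩
    exact ⟨hp1, by nlinarith [sq_nonneg (p.1 - x)]⟩
end

section
/- Let Ω = {(x,y,z) ∈ ℝ³ : x² ≤ y ≤ 1 − z² + x², z ∈ [0,1]} and let G : Ω → ℝ. Assume that for every (x,y,z) ∈ Ω with y > x² there exist real numbers ℓ_1(x,y,z) and ℓ_2(x,y,z) such that G(x̄, ȳ, z̄) ≤ G(x,y,z) + ℓ_1(x,y,z)·(x̄ − x) + ℓ_2(x,y,z)·(ȳ − y) for every (x̄, ȳ, z̄) ∈ Ω with z̄² = z² + (x̄ − x)². Then G satisfies the main inequality: G(x,y,z) ≥ Σ_{j=1}^N α_j G(x_j, y_j, z_j) whenever (x,y,z) ∈ Ω, (x_j,y_j,z_j) ∈ Ω, α_j ∈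 [0,1], Σ_j α_j = 1, Σ_j α_j x_j = x, Σ_j α_j y_j = y, and z_j² = z² + (x_j − x)² for every j. -/
open MeasureTheory Filter

/-- If at every point of `Ω` with `y > x²` the function `G` lies
below a "tangent plane" along the admissible moves, then `G` satisfies the main
inequality for all splittings obeying the splitting rules. -/
theorem under_tangent_implies_main_inequality
    (G : ℝ → ℝ → ℝ → ℝ)
    (htang : ∀ x y z : ℝ,
      x ^ 2 ≤ y → y ≤ 1 - z ^ 2 + x ^ 2 → 0 ≤ z → z ≤ 1 → x ^ 2 < y →
      ∃ ℓ₁ ℓ₂ : ℝ, ∀ x' y' z' : ℝ,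
        x' ^ 2 ≤ y' → y' ≤ 1 - z' ^ 2 + x' ^ 2 → 0 ≤ z' → z' ≤ 1 →
        z' ^ 2 = z ^ 2 + (x' - x) ^ 2 →
        G x' y' z' ≤ G x y z + ℓ₁ * (x' - x) + ℓ₂ * (y' - y)) :
    ∀ x y z : ℝ,
      x ^ 2 ≤ y → y ≤ 1 - z ^ 2 + x ^ 2 → 0 ≤ z → z ≤ 1 →
      ∀ (N : ℕ) (α xs ys zs : Fin N → ℝ),
        (∀ j, 0 ≤ α j) → (∀ j, α j ≤ 1) → (∑ j, α j) = 1 →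
        (∑ j, α j * xs j) = x → (∑ j, α j * ys j) = y →
        (∀ j, (xs j) ^ 2 ≤ ys j ∧ ys j ≤ 1 - (zs j) ^ 2 + (xs j) ^ 2 ∧
          0 ≤ zs j ∧ zs j ≤ 1) →
        (∀ j, (zs j) ^ 2 = z ^ 2 + (xs j - x) ^ 2) →
        (∑ j, α j * G (xs j) (ys j) (zs j)) ≤ G x y z := by
  intro x y z hx hy hz0 hz1 N α xs ys zs hα0 hα1 hsum hsx hsy hΩ hzz
  rcases lt_or_eq_of_le hx with hlt | heq
  · -- interior case: use the tangent plane
    obtain ⟨ℓ₁, ℓ₂, hℓ⟩ := htang x y z hx hy hz0 hz1 hlt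
    have step : (∑ j, α j * G (xs j) (ys j) (zs j))
        ≤ ∑ j, α j * (G x y z + ℓ₁ * (xs j - x) + ℓ₂ * (ys j - y)) := by
      apply Finset.sum_le_sum
      intro j _
      exact mul_le_mul_of_nonneg_left
        (hℓ _ _ _ (hΩ j).1 (hΩ j).2.1 (hΩ j).2.2.1 (hΩ j).2.2.2 (hzz j)) (hα0 j)
    have e : ∑ j, α j * (G x y z + ℓ₁ * (xs j - x) + ℓ₂ * (ys j - y))
        = G x y z := by
      calc ∑ j, α j * (G x y z + ℓ₁ * (xs j - x) + ℓ₂ * (ys j - y))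
          = ∑ j, (α j * G x y z + ℓ₁ * (α j * xs j) - ℓ₁ * (x * α j)
              + ℓ₂ * (α j * ys j) - ℓ₂ * (y * α j)) :=
            Finset.sum_congr rfl fun j _ => by ring
        _ = G x y z := by
            simp only [Finset.sum_sub_distrib, Finset.sum_add_distrib,
              ← Finset.mul_sum, ← Finset.sum_mul]
            rw [hsum, hsx, hsy]
            ring
    rw [e] at step
    exact step
  · -- boundary case y = x²
    have hkey : ∑ j, (α j * (ys j - (xs j) ^ 2) + α j * (xs j - x) ^ 2) = 0 := by
      have e : ∑ j, (α j * (ys j - (xs j) ^ 2) + α j * (xs j - x) ^ 2)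
          = (∑ j, α j * ys j) - 2 * x * (∑ j, α j * xs j) + x ^ 2 * (∑ j, α j) := by
        rw [Finset.mul_sum, Finset.mul_sum, ← Finset.sum_sub_distrib,
          ← Finset.sum_add_distrib]
        apply Finset.sum_congr rfl
        intro j _; ring
      rw [e, hsum, hsx, hsy]
      nlinarith [heq]
    have hterm : ∀ j ∈ Finset.univ,
        α j * (ys j - (xs j) ^ 2) + α j * (xs j - x) ^ 2 = 0 := by
      rw [← Finset.sum_eq_zero_iff_of_nonneg]
      · exact hkey
      · intro j _
        have h1 : 0 ≤ α j * (ys j - (xs j) ^ 2) :=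
          mul_nonneg (hα0 j) (by linarith [(hΩ j).1])
        have h2 : 0 ≤ α j * (xs j - x) ^ 2 := mul_nonneg (hα0 j) (sq_nonneg _)
        linarith
    have hpt : ∀ j, α j * G (xs j) (ys j) (zs j) = α j * G x y z := by
      intro j
      rcases eq_or_lt_of_le (hα0 j) with h0 | hpos
      · rw [← h0]; ring
      · have h1 : 0 ≤ α j * (ys j - (xs j) ^ 2) :=
          mul_nonneg (hα0 j) (by linarith [(hΩ j).1])
        have h2 : 0 ≤ α j * (xs j - x) ^ 2 := mul_nonneg (hα0 j) (sq_nonneg _)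
        have hj := hterm j (Finset.mem_univ j)
        have ha : α j * (ys j - (xs j) ^ 2) = 0 := by linarith
        have hb : α j * (xs j - x) ^ 2 = 0 := by linarith
        have hx_eq : xs j = x := by
          have : (xs j - x) ^ 2 = 0 := by
            rcases mul_eq_zero.mp hb with h | h
            · exact absurd h (ne_of_gt hpos)
            · exact h
          have := pow_eq_zero_iff (n := 2) (by norm_num) |>.mp this
          linarith
        have hy_eq : ys j = y := by
          have : ys j - (xs j) ^ 2 = 0 := by
            rcases mul_eq_zero.mp ha with h | h
            · exact absurd h (ne_of_gt hpos)
            · exact h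
          rw [hx_eq] at this
          linarith [heq]
        have hz_eq : zs j = z := by
          have h := hzz j
          rw [hx_eq] at h
          have h' : (zs j) ^ 2 = z ^ 2 := by rw [h]; ring
          have : (zs j - z) * (zs j + z) = 0 := by nlinarith
          rcases mul_eq_zero.mp this with h'' | h''
          · linarith
          · have := (hΩ j).2.2.1; linarith
        rw [hx_eq, hy_eq, hz_eq]
    have : (∑ j, α j * G (xs j) (ys j) (zs j)) = G x y z := by
      calc (∑ j, α j * G (xs j) (ys j) (zs j)) = ∑ j, α j * G x y z :=
            Finset.sum_congr rfl fun j _ => hpt j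
        _ = (∑ j, α j) * G x y z := by rw [Finset.sum_mul]
        _ = G x y z := by rw [hsum]; ring
    exact le_of_eq this
end

section
/- Let Ω = {(x,y,z) ∈ ℝ³ : x² ≤ y ≤ 1 − z² + x², z ∈ [0,1]}. Let f : ℝ → [0,∞) and let G : Ω → ℝ be nonnegative, satisfy the boundary condition G(u, u², ζ) = f(u) for all (u,u²,ζ) ∈ Ω, and satisfy the main inequality: G(x,y,z) ≥ Σ_{j=1}^N α_j G(x_j, y_j, z_j) whenever all points lie in Ω, α_j ∈ [0,1], Σ α_j = 1, Σ α_j x_j = x, Σ α_j y_j = y, and z_j² = z² + (x_j − x)² for each j. Fix z_0 ∈ (0,1) and let (x,y) ∈ ℝ² satisfy 0 ≤ y − x² < 1 − z_0² and y ≥ 2x². Let (x_0, y_0) = α·(x, y) with α ∈ (0,1). Then G(x_0, y_0, z_0) ≥ α · liminf_{z→z_0+} G(x, y, z) + (1 − α)·f(0). -/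
/-!
Splitting `(αx, αy, z₀)` once into `(x, y, ·)` and the boundary point `(0, 0, ·)` raises `z²` by
`((1 - α) x)²`, which is not small. Going from `α (x, y)` to `(x, y)` instead in `n` radial steps,
each a two-point split of `t (x, y)` into `t' (x, y)` and `(0, 0)`, raises `z²` by only
`((1 - α) x)² / n` in total, and no step increases the ratio `(G - f 0) / t`. Letting `n → ∞`
gives the estimate along a sequence `z ↓ z₀`.

On the axis `x = 0` the radial steps do not move `z` at all. There one splits `(0, y, z₀)`
symmetrically into `(±δ, y, ·)` and each of these back onto the axis, dropping a point of weight
`δ / √y` where `G ≥ 0`; the weight `1 - δ / √y` left on the axis tends to `1` as `δ → 0`.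
-/

open Filter Topology

def InOmega (x y z : ℝ) : Prop :=
  x ^ 2 ≤ y ∧ y ≤ 1 - z ^ 2 + x ^ 2 ∧ 0 ≤ z ∧ z ≤ 1

def MainInequality (G : ℝ → ℝ → ℝ → ℝ) : Prop :=
  ∀ x y z : ℝ, x ^ 2 ≤ y → y ≤ 1 - z ^ 2 + x ^ 2 → 0 ≤ z → z ≤ 1 →
    ∀ (N : ℕ) (α xs ys zs : Fin N → ℝ),
      (∀ j, 0 ≤ α j) → (∀ j, α j ≤ 1) → (∑ j, α j) = 1 →
      (∑ j, α j * xs j) = x → (∑ j, α j * ys j) = y →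
      (∀ j, InOmega (xs j) (ys j) (zs j)) →
      (∀ j, (zs j) ^ 2 = z ^ 2 + (xs j - x) ^ 2) →
      (∑ j, α j * G (xs j) (ys j) (zs j)) ≤ G x y z

theorem inOmega_sqrt {x y w : ℝ} (hxy : x ^ 2 ≤ y) (hw : y ≤ 1 - w + x ^ 2) (hw0 : 0 ≤ w) :
    InOmega x y √w :=
  ⟨hxy, by rwa [Real.sq_sqrt hw0], Real.sqrt_nonneg w, Real.sqrt_le_one.2 (by linarith)⟩

theorem inOmega_mul_sqrt {t x y w : ℝ} (ht0 : 0 ≤ t) (ht1 : t ≤ 1) (hxy : 2 * x ^ 2 ≤ y)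
    (hw0 : 0 ≤ w) (hw : w ≤ 1 - (y - x ^ 2)) : InOmega (t * x) (t * y) √w := by
  -- `t (y - t x²) ≤ y - x²` is `(1 - t) (y - (1 + t) x²) ≥ 0`, which is where `y ≥ 2x²` enters.
  have hmono : t * y - (t * x) ^ 2 ≤ y - x ^ 2 := by
    nlinarith [mul_nonneg (sub_nonneg.2 ht1) (show 0 ≤ y - (1 + t) * x ^ 2 by nlinarith)]
  exact inOmega_sqrt (by nlinarith [mul_nonneg (mul_nonneg ht0 (sub_nonneg.2 ht1)) (sq_nonneg x)])
    (by linarith) hw0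

theorem InOmega.of_sq_eq {x x' y z : ℝ} (h : InOmega x y z) (hx : x' ^ 2 = x ^ 2) :
    InOmega x' y z := by
  rwa [InOmega, hx]

theorem eventually_inOmega_nhdsGT {x y z₀ : ℝ} (hz₀ : 0 ≤ z₀) (hxy : x ^ 2 ≤ y)
    (hroom : y - x ^ 2 < 1 - z₀ ^ 2) : ∀ᶠ z in 𝓝[>] z₀, InOmega x y z := by
  have hsq : ∀ᶠ z in 𝓝 z₀, z ^ 2 < 1 - (y - x ^ 2) :=
    (continuous_pow 2).continuousAt.eventually_lt continuousAt_const (by linarith)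
  filter_upwards [nhdsWithin_le_nhds hsq, self_mem_nhdsWithin] with z hz (hz₀z : z₀ < z)
  exact ⟨hxy, by linarith, by linarith, by nlinarith⟩

theorem isBoundedUnder_ge_nhdsGT {G : ℝ → ℝ → ℝ → ℝ}
    (hG0 : ∀ x y z, InOmega x y z → 0 ≤ G x y z) {x y z₀ : ℝ} (hz₀ : 0 ≤ z₀)
    (hxy : x ^ 2 ≤ y) (hroom : y - x ^ 2 < 1 - z₀ ^ 2) :
    IsBoundedUnder (· ≥ ·) (𝓝[>] z₀) (G x y) :=
  isBoundedUnder_of_eventually_ge ((eventually_inOmega_nhdsGT hz₀ hxy hroom).mono fun z hz =>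
    hG0 x y z hz)

theorem tendsto_sqrt_sq_add_nhdsGT {ι : Type*} {l : Filter ι} {v : ι → ℝ} {z₀ : ℝ}
    (hz₀ : 0 ≤ z₀) (hv : Tendsto v l (𝓝 0)) (hv0 : ∀ᶠ i in l, 0 < v i) :
    Tendsto (fun i => √(z₀ ^ 2 + v i)) l (𝓝[>] z₀) := by
  refine tendsto_nhdsWithin_iff.2 ⟨?_, hv0.mono fun i hi => Real.lt_sqrt_of_sq_lt (by linarith)⟩
  have h := (Real.continuous_sqrt.tendsto (z₀ ^ 2 + 0)).comp (tendsto_const_nhds.add hv)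
  rwa [add_zero, Real.sqrt_sq hz₀] at h

theorem mul_liminf_add_le {ι β : Type*} {l : Filter ι} [l.NeBot] {F : Filter β} {u : β → ℝ}
    {φ : ι → β} {w : ι → ℝ} {a b c : ℝ} (ha : 0 < a) (hu : IsBoundedUnder (· ≥ ·) F u)
    (hφ : Tendsto φ l F) (hw : Tendsto w l (𝓝 1))
    (h : ∀ᶠ i in l, a * (w i * u (φ i)) + b ≤ c) : a * liminf u F + b ≤ c := by
  suffices liminf u F ≤ (c - b) / a by rw [le_div_iff₀ ha] at this; linarith
  refine le_of_forall_gt_imp_ge_of_dense fun c' hc' => liminf_le_of_frequently_le ?_ hu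
  have hlim : Tendsto (fun i => (c - b) / (a * w i)) l (𝓝 ((c - b) / a)) := by
    have h := (tendsto_const_nhds (x := c - b)).div (tendsto_const_nhds.mul hw)
      (by simpa using ha.ne')
    rwa [mul_one] at h
  refine hφ.frequently (Eventually.frequently ?_)
  filter_upwards [h, hw.eventually (lt_mem_nhds one_pos), hlim.eventually (gt_mem_nhds hc')]
    with i hi hwi hci
  refine le_trans ?_ hci.le
  rw [le_div_iff₀' (mul_pos ha hwi)]
  linarith

namespace MainInequality

variable {G : ℝ → ℝ → ℝ → ℝ}

theorem two_point (hG : MainInequality G) {x y z x₁ y₁ z₁ x₂ y₂ z₂ s : ℝ}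
    (hs0 : 0 ≤ s) (hs1 : s ≤ 1)
    (h : InOmega x y z) (h₁ : InOmega x₁ y₁ z₁) (h₂ : InOmega x₂ y₂ z₂)
    (hx : s * x₁ + (1 - s) * x₂ = x) (hy : s * y₁ + (1 - s) * y₂ = y)
    (hz₁ : z₁ ^ 2 = z ^ 2 + (x₁ - x) ^ 2) (hz₂ : z₂ ^ 2 = z ^ 2 + (x₂ - x) ^ 2) :
    s * G x₁ y₁ z₁ + (1 - s) * G x₂ y₂ z₂ ≤ G x y z := by
  simpa [Fin.sum_univ_two] using
    hG x y z h.1 h.2.1 h.2.2.1 h.2.2.2 2 ![s, 1 - s] ![x₁, x₂] ![y₁, y₂] ![z₁, z₂]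
      (by simp [Fin.forall_fin_two, hs0, hs1]) (by simp [Fin.forall_fin_two, hs0, hs1])
      (by simp [Fin.sum_univ_two]) (by simpa [Fin.sum_univ_two] using hx)
      (by simpa [Fin.sum_univ_two] using hy) (by simp [Fin.forall_fin_two, h₁, h₂])
      (by simp [Fin.forall_fin_two, hz₁, hz₂])

theorem radial_step (hG : MainInequality G) {c : ℝ}
    (hc : ∀ ζ, 0 ≤ ζ → ζ ≤ 1 → G 0 0 ζ = c) {t t' x y z z' : ℝ} (ht : 0 < t) (htt' : t ≤ t')
    (h : InOmega (t * x) (t * y) z) (h' : InOmega (t' * x) (t' * y) z')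
    (hz' : z' ^ 2 = z ^ 2 + ((t' - t) * x) ^ 2) (hζ : z ^ 2 + (t * x) ^ 2 ≤ 1) :
    (G (t' * x) (t' * y) z' - c) / t' ≤ (G (t * x) (t * y) z - c) / t := by
  have ht' : 0 < t' := ht.trans_le htt'
  have h₀ : InOmega 0 0 √(z ^ 2 + (t * x) ^ 2) :=
    inOmega_sqrt (by simp) (by linarith) (by positivity)
  have key := hG.two_point (s := t / t') (by positivity) ((div_le_one ht').2 htt') h h' h₀
    (by field_simp; ring) (by field_simp; ring) (by rw [hz']; ring)
    (by rw [Real.sq_sqrt (by positivity)]; ring)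
  rw [hc _ h₀.2.2.1 h₀.2.2.2] at key
  rw [div_le_div_iff₀ ht' ht]
  have := mul_le_mul_of_nonneg_left key ht'.le
  field_simp at this
  linarith

theorem radial_chain (hG : MainInequality G) {c : ℝ}
    (hc : ∀ ζ, 0 ≤ ζ → ζ ≤ 1 → G 0 0 ζ = c) {x y z₀ α : ℝ} {n : ℕ} (hn : 0 < n)
    (hz₀ : 0 ≤ z₀) (hα0 : 0 < α) (hα1 : α ≤ 1) (hxy : 2 * x ^ 2 ≤ y)
    (hroom : z₀ ^ 2 + ((1 - α) * x) ^ 2 / n ≤ 1 - (y - x ^ 2)) :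
    α * G x y √(z₀ ^ 2 + ((1 - α) * x) ^ 2 / n) + (1 - α) * c ≤ G (α * x) (α * y) z₀ := by
  have hn' : (0 : ℝ) < n := Nat.cast_pos.2 hn
  set τ := (1 - α) / n with hτ
  have hτ0 : 0 ≤ τ := div_nonneg (sub_nonneg.2 hα1) hn'.le
  have hnτ : n * τ = 1 - α := by rw [hτ]; field_simp
  set t : ℕ → ℝ := fun k => α + k * τ
  set w : ℕ → ℝ := fun k => z₀ ^ 2 + k * (τ * x) ^ 2
  have hwn : w n = z₀ ^ 2 + ((1 - α) * x) ^ 2 / n := by simp only [w, hτ]; field_simp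
  have ht : ∀ k ≤ n, α ≤ t k ∧ t k ≤ 1 := fun k hk => by
    have : (k : ℝ) * τ ≤ n * τ := by gcongr
    exact ⟨by simp only [t]; nlinarith, by linarith⟩
  have hw : ∀ k ≤ n, 0 ≤ w k ∧ w k ≤ 1 - (y - x ^ 2) := fun k hk => by
    have : (k : ℝ) * (τ * x) ^ 2 ≤ n * (τ * x) ^ 2 := by gcongr
    exact ⟨by positivity, by linarith⟩
  have hmem : ∀ k ≤ n, InOmega (t k * x) (t k * y) √(w k) := fun k hk =>
    inOmega_mul_sqrt (hα0.le.trans (ht k hk).1) (ht k hk).2 hxy (hw k hk).1 (hw k hk).2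
  set r : ℕ → ℝ := fun k => (G (t k * x) (t k * y) √(w k) - c) / t k
  have hstep : ∀ k < n, r (k + 1) ≤ r k := fun k hk => by
    have htk := ht k hk.le
    refine hG.radial_step hc (hα0.trans_le htk.1) (by simp only [t]; push_cast; linarith)
      (hmem k hk.le) (hmem (k + 1) hk) ?_ ?_
    · rw [Real.sq_sqrt (hw _ hk).1, Real.sq_sqrt (hw _ hk.le).1]
      simp only [t, w]
      push_cast
      ring
    · have ht2 : t k ^ 2 ≤ 1 := pow_le_one₀ (hα0.le.trans htk.1) htk.2
      rw [Real.sq_sqrt (hw _ hk.le).1]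
      nlinarith [(hw k hk.le).2, mul_le_mul_of_nonneg_right ht2 (sq_nonneg x)]
  have hchain : ∀ k ≤ n, r k ≤ r 0 := by
    intro k
    induction k with
    | zero => exact fun _ => le_rfl
    | succ k ih => exact fun hk => (hstep k hk).trans (ih (Nat.le_of_succ_le hk))
  have hfinal := hchain n le_rfl
  have ht0 : t 0 = α := by simp [t]
  have htn : t n = 1 := by simp only [t]; linarith
  have hw0 : √(w 0) = z₀ := by simp [w, Real.sqrt_sq hz₀]
  simp only [r, ht0, htn, hw0, hwn, one_mul, div_one] at hfinal
  rw [le_div_iff₀ hα0] at hfinal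
  linarith

theorem mul_le_of_off_axis (hG : MainInequality G) (hG0 : ∀ x y z, InOmega x y z → 0 ≤ G x y z)
    {y Z Z' d e : ℝ} (he : e ≠ 0) (hde0 : 0 ≤ d / e) (hde1 : d / e ≤ 1)
    (h : InOmega d y Z) (h' : InOmega 0 y Z') (hZ' : Z' ^ 2 = Z ^ 2 + d ^ 2)
    (he_mem : InOmega e y √(Z ^ 2 + (e - d) ^ 2)) :
    (1 - d / e) * G 0 y Z' ≤ G d y Z := by
  have key := hG.two_point (s := 1 - d / e) (by linarith) (by linarith) h h' he_mem
    (by field_simp; ring) (by ring) (by rw [hZ']; ring)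
    (by rw [Real.sq_sqrt (by positivity)])
  nlinarith [hG0 _ _ _ he_mem]

theorem mul_le_of_axis (hG : MainInequality G) (hG0 : ∀ x y z, InOmega x y z → 0 ≤ G x y z)
    {y z δ e : ℝ} (hz : 0 ≤ z) (hδ : 0 < δ) (hδe : δ ≤ e) (he : e ^ 2 ≤ y)
    (hroom : z ^ 2 + 2 * δ ^ 2 + y ≤ 1) :
    (1 - δ / e) * G 0 y √(z ^ 2 + 2 * δ ^ 2) ≤ G 0 y z := by
  have he0 : 0 < e := hδ.trans_le hδe
  have hδy : δ ^ 2 ≤ y := by nlinarith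
  have hy0 : 0 ≤ y := (sq_nonneg δ).trans hδy
  set Z := √(z ^ 2 + δ ^ 2)
  have hZ : Z ^ 2 = z ^ 2 + δ ^ 2 := Real.sq_sqrt (by positivity)
  have hZmem : InOmega δ y Z := inOmega_sqrt hδy (by linarith [sq_nonneg δ]) (by positivity)
  have hside : ∀ σ : ℝ, σ ^ 2 = 1 →
      (1 - δ / e) * G 0 y √(z ^ 2 + 2 * δ ^ 2) ≤ G (σ * δ) y Z := by
    intro σ hσ
    have hσ0 : σ ≠ 0 := by rintro rfl; norm_num at hσ
    have hdiv : σ * δ / (σ * e) = δ / e := mul_div_mul_left δ e hσ0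
    have hsq : ∀ a : ℝ, (σ * a) ^ 2 = a ^ 2 := fun a => by rw [mul_pow, hσ, one_mul]
    rw [← hdiv]
    refine hG.mul_le_of_off_axis hG0 (mul_ne_zero hσ0 he0.ne') (by rw [hdiv]; positivity)
      (by rw [hdiv, div_le_one he0]; exact hδe) (hZmem.of_sq_eq (hsq δ))
      (inOmega_sqrt (by simpa using hy0) (by linarith) (by positivity))
      (by rw [Real.sq_sqrt (by positivity), hZ, hsq]; ring) ?_
    rw [← mul_sub, hsq, hZ]
    exact (inOmega_sqrt he (by nlinarith) (by positivity)).of_sq_eq (hsq e)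
  have hsplit := hG.two_point (s := 1 / 2) (by norm_num) (by norm_num)
    (inOmega_sqrt (by simpa using hy0) (by linarith [sq_nonneg δ]) (sq_nonneg z) :
      InOmega 0 y √(z ^ 2))
    hZmem (hZmem.of_sq_eq (neg_sq δ))
    (by ring) (by ring) (by rw [hZ, Real.sq_sqrt (sq_nonneg z)]; ring)
    (by rw [hZ, Real.sq_sqrt (sq_nonneg z)]; ring)
  rw [Real.sqrt_sq hz] at hsplit
  have hright := hside 1 (one_pow 2)
  have hleft := hside (-1) (by norm_num)
  rw [one_mul] at hright
  rw [neg_one_mul] at hleft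
  linarith

theorem mul_liminf_add_le_of_ne_zero (hG : MainInequality G)
    (hG0 : ∀ x y z, InOmega x y z → 0 ≤ G x y z) {c : ℝ}
    (hc : ∀ ζ, 0 ≤ ζ → ζ ≤ 1 → G 0 0 ζ = c) {x y z₀ α : ℝ} (hx : x ≠ 0) (hz₀ : 0 ≤ z₀)
    (hα0 : 0 < α) (hα1 : α < 1) (hxy : 2 * x ^ 2 ≤ y) (hroom : y - x ^ 2 < 1 - z₀ ^ 2) :
    α * liminf (G x y) (𝓝[>] z₀) + (1 - α) * c ≤ G (α * x) (α * y) z₀ := by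
  have hv : Tendsto (fun n : ℕ => ((1 - α) * x) ^ 2 / n) atTop (𝓝 0) :=
    tendsto_const_div_atTop_nhds_zero_nat _
  refine mul_liminf_add_le (w := fun _ => 1) hα0
    (isBoundedUnder_ge_nhdsGT hG0 hz₀ (by nlinarith) hroom)
    (tendsto_sqrt_sq_add_nhdsGT hz₀ hv ((eventually_gt_atTop 0).mono fun n hn => by positivity))
    tendsto_const_nhds ?_
  filter_upwards [eventually_gt_atTop 0, hv.eventually (gt_mem_nhds (by linarith :
    (0 : ℝ) < 1 - (y - x ^ 2) - z₀ ^ 2))] with n hn hvn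
  simpa using hG.radial_chain hc hn hz₀ hα0 hα1.le hxy (by linarith)

theorem mul_liminf_add_le_of_axis (hG : MainInequality G)
    (hG0 : ∀ x y z, InOmega x y z → 0 ≤ G x y z) {c : ℝ}
    (hc : ∀ ζ, 0 ≤ ζ → ζ ≤ 1 → G 0 0 ζ = c) {y z₀ α : ℝ} (hy : 0 < y) (hz₀ : 0 ≤ z₀)
    (hα0 : 0 < α) (hα1 : α ≤ 1) (hroom : y < 1 - z₀ ^ 2) :
    α * liminf (G 0 y) (𝓝[>] z₀) + (1 - α) * c ≤ G 0 (α * y) z₀ := by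
  have hradial : α * G 0 y z₀ + (1 - α) * c ≤ G 0 (α * y) z₀ := by
    simpa [Real.sqrt_sq hz₀] using
      hG.radial_chain hc (x := 0) one_pos hz₀ hα0 hα1 (by simpa using hy.le) (by simp; linarith)
  have hv : Tendsto (fun δ : ℝ => 2 * δ ^ 2) (𝓝[>] 0) (𝓝 0) := by
    refine tendsto_nhdsWithin_of_tendsto_nhds ?_
    exact (by fun_prop : Continuous fun δ : ℝ => 2 * δ ^ 2).tendsto' 0 0 (by norm_num)
  have hw : Tendsto (fun δ : ℝ => 1 - δ / √y) (𝓝[>] 0) (𝓝 1) := by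
    refine tendsto_nhdsWithin_of_tendsto_nhds ?_
    exact (by fun_prop : Continuous fun δ : ℝ => 1 - δ / √y).tendsto' 0 1 (by simp)
  refine mul_liminf_add_le hα0 (isBoundedUnder_ge_nhdsGT hG0 hz₀ (by simpa using hy.le)
    (by simpa using hroom)) (tendsto_sqrt_sq_add_nhdsGT hz₀ hv ?_) hw ?_
  · filter_upwards [self_mem_nhdsWithin] with δ (hδ : 0 < δ)
    positivity
  filter_upwards [self_mem_nhdsWithin, nhdsWithin_le_nhds (eventually_le_nhds (Real.sqrt_pos.2 hy)),
    hv.eventually (gt_mem_nhds (by linarith : (0 : ℝ) < 1 - z₀ ^ 2 - y))] with δ hδ hδe hδroom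
  have := hG.mul_le_of_axis hG0 hz₀ hδ hδe (Real.sq_sqrt hy.le).le (by linarith)
  nlinarith

end MainInequality

theorem liminf_nhdsGT_eq_of_eqOn_Ioo {u : ℝ → ℝ} {c a b : ℝ} (hab : a < b)
    (hu : Set.EqOn u (fun _ => c) (Set.Ioo a b)) : liminf u (𝓝[>] a) = c :=
  (liminf_congr (eventually_of_mem (Ioo_mem_nhdsGT hab) hu)).trans (liminf_const c)

theorem convexity_towards_origin_general
    (f : ℝ → ℝ)
    (G : ℝ → ℝ → ℝ → ℝ)
    (hG0 : ∀ x y z : ℝ,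
      x ^ 2 ≤ y → y ≤ 1 - z ^ 2 + x ^ 2 → 0 ≤ z → z ≤ 1 → 0 ≤ G x y z)
    (hbdry : ∀ u ζ : ℝ, 0 ≤ ζ → ζ ≤ 1 → G u (u ^ 2) ζ = f u)
    (hmain : ∀ x y z : ℝ,
      x ^ 2 ≤ y → y ≤ 1 - z ^ 2 + x ^ 2 → 0 ≤ z → z ≤ 1 →
      ∀ (N : ℕ) (α xs ys zs : Fin N → ℝ),
        (∀ j, 0 ≤ α j) → (∀ j, α j ≤ 1) → (∑ j, α j) = 1 →
        (∑ j, α j * xs j) = x → (∑ j, α j * ys j) = y →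
        (∀ j, (xs j) ^ 2 ≤ ys j ∧ ys j ≤ 1 - (zs j) ^ 2 + (xs j) ^ 2 ∧
          0 ≤ zs j ∧ zs j ≤ 1) →
        (∀ j, (zs j) ^ 2 = z ^ 2 + (xs j - x) ^ 2) →
        (∑ j, α j * G (xs j) (ys j) (zs j)) ≤ G x y z)
    (z₀ : ℝ) (hz₀ : 0 < z₀ ∧ z₀ < 1)
    (x y : ℝ) (h2 : y - x ^ 2 < 1 - z₀ ^ 2)
    (h3 : 2 * x ^ 2 ≤ y)
    (α x₀ y₀ : ℝ) (hα : 0 < α ∧ α < 1) (hx₀ : x₀ = α * x) (hy₀ : y₀ = α * y) :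
    α * Filter.liminf (fun z : ℝ => G x y z) (nhdsWithin z₀ (Set.Ioi z₀)) +
      (1 - α) * f 0 ≤ G x₀ y₀ z₀ := by
  subst hx₀ hy₀
  have hG : MainInequality G := hmain
  have hnonneg : ∀ x y z, InOmega x y z → 0 ≤ G x y z := fun x y z h =>
    hG0 x y z h.1 h.2.1 h.2.2.1 h.2.2.2
  have hc : ∀ ζ, 0 ≤ ζ → ζ ≤ 1 → G 0 0 ζ = f 0 := fun ζ h0 h1 => by simpa using hbdry 0 ζ h0 h1
  rcases eq_or_ne x 0 with rfl | hx
  · rw [mul_zero]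
    rcases (show 0 ≤ y by linarith).eq_or_lt with rfl | hy
    · rw [liminf_nhdsGT_eq_of_eqOn_Ioo hz₀.2 fun z hz => hc z (hz₀.1.trans hz.1).le hz.2.le,
        mul_zero, hc z₀ hz₀.1.le hz₀.2.le]
      exact le_of_eq (by ring)
    · exact hG.mul_liminf_add_le_of_axis hnonneg hc hy hz₀.1.le hα.1 hα.2.le (by simpa using h2)
  · exact hG.mul_liminf_add_le_of_ne_zero hnonneg hc hx hz₀.1.le hα.1 hα.2 h3 h2

/-- **convexity estimate towards the origin.** For a nonnegative
function `G` on `Ω` satisfying the boundary condition and the main inequality, and a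
point `(x,y)` with `0 ≤ y − x² < 1 − z₀²`, `y ≥ 2x²`, setting `(x₀,y₀) = α(x,y)` with
`α ∈ (0,1)` one has
`G(x₀,y₀,z₀) ≥ α·liminf_{z→z₀⁺} G(x,y,z) + (1 − α)·f(0)`. -/
theorem convexity_towards_origin
    (f : ℝ → ℝ) (hf0 : ∀ t, 0 ≤ f t)
    (G : ℝ → ℝ → ℝ → ℝ)
    (hG0 : ∀ x y z : ℝ,
      x ^ 2 ≤ y → y ≤ 1 - z ^ 2 + x ^ 2 → 0 ≤ z → z ≤ 1 → 0 ≤ G x y z)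
    (hbdry : ∀ u ζ : ℝ, 0 ≤ ζ → ζ ≤ 1 → G u (u ^ 2) ζ = f u)
    (hmain : ∀ x y z : ℝ,
      x ^ 2 ≤ y → y ≤ 1 - z ^ 2 + x ^ 2 → 0 ≤ z → z ≤ 1 →
      ∀ (N : ℕ) (α xs ys zs : Fin N → ℝ),
        (∀ j, 0 ≤ α j) → (∀ j, α j ≤ 1) → (∑ j, α j) = 1 →
        (∑ j, α j * xs j) = x → (∑ j, α j * ys j) = y →
        (∀ j, (xs j) ^ 2 ≤ ys j ∧ ys j ≤ 1 - (zs j) ^ 2 + (xs j) ^ 2 ∧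
          0 ≤ zs j ∧ zs j ≤ 1) →
        (∀ j, (zs j) ^ 2 = z ^ 2 + (xs j - x) ^ 2) →
        (∑ j, α j * G (xs j) (ys j) (zs j)) ≤ G x y z)
    (z₀ : ℝ) (hz₀ : 0 < z₀ ∧ z₀ < 1)
    (x y : ℝ) (h1 : 0 ≤ y - x ^ 2) (h2 : y - x ^ 2 < 1 - z₀ ^ 2)
    (h3 : 2 * x ^ 2 ≤ y)
    (α x₀ y₀ : ℝ) (hα : 0 < α ∧ α < 1) (hx₀ : x₀ = α * x) (hy₀ : y₀ = α * y) :
    α * Filter.liminf (fun z : ℝ => G x y z) (nhdsWithin z₀ (Set.Ioi z₀)) +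
      (1 - α) * f 0 ≤ G x₀ y₀ z₀ :=
  convexity_towards_origin_general f G hG0 hbdry hmain z₀ hz₀ x y h2 h3 α x₀ y₀ hα hx₀ hy₀
end

section
/- Let ω_smile = {(x,y) ∈ ℝ² : 2x² ≤ y ≤ x² + 1, x ∈ [−1,1]} and let R : ω_smile → ℝ. Assume that for every (x_0, y_0) ∈ ω_smile there exist real numbers ℓ_1 and ℓ_2 (the partial derivatives of R at (x_0,y_0)) such that R(x̄, ȳ) ≤ R(x_0, y_0) + ℓ_1·(x̄ − x_0) + ℓ_2·(ȳ − y_0) for every (x̄, ȳ) ∈ ω_smile with ȳ − y_0 = 2x_0·(x̄ − x_0). Then R satisfies the main inequality of the model problem: R(x,y) ≥ α_+·R(x_+, y_+) + α_−·R(x_−, y_−) whenever (x,y), (x_+, y_+), (x_−, y_−) ∈ ω_smile, α_+, α_− ∈ (0,1) with α_+ + α_− = 1, x = α_+ x_+ + α_− x_−, y = α_+ y_+ + α_− y_−, and y_+ − y_− = 2x·(x_+ − x_−). -/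
open MeasureTheory Filter

/-- **tangent-plane condition implies the main inequality of the model
problem on `ω_smile`.** -/
theorem model_under_tangent_implies_main_inequality
    (R : ℝ → ℝ → ℝ)
    (htang : ∀ x₀ y₀ : ℝ,
      2 * x₀ ^ 2 ≤ y₀ → y₀ ≤ x₀ ^ 2 + 1 → -1 ≤ x₀ → x₀ ≤ 1 →
      ∃ ℓ₁ ℓ₂ : ℝ, ∀ x' y' : ℝ,
        2 * x' ^ 2 ≤ y' → y' ≤ x' ^ 2 + 1 → -1 ≤ x' → x' ≤ 1 →
        y' - y₀ = 2 * x₀ * (x' - x₀) →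
        R x' y' ≤ R x₀ y₀ + ℓ₁ * (x' - x₀) + ℓ₂ * (y' - y₀)) :
    ∀ x y xp yp xm ym αp αm : ℝ,
      2 * x ^ 2 ≤ y → y ≤ x ^ 2 + 1 → -1 ≤ x → x ≤ 1 →
      2 * xp ^ 2 ≤ yp → yp ≤ xp ^ 2 + 1 → -1 ≤ xp → xp ≤ 1 →
      2 * xm ^ 2 ≤ ym → ym ≤ xm ^ 2 + 1 → -1 ≤ xm → xm ≤ 1 →
      0 < αp → αp < 1 → 0 < αm → αm < 1 → αp + αm = 1 →
      x = αp * xp + αm * xm → y = αp * yp + αm * ym →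
      yp - ym = 2 * x * (xp - xm) →
      αp * R xp yp + αm * R xm ym ≤ R x y := by
  intro x y xp yp xm ym αp αm h1 h2 h3 h4 h5 h6 h7 h8 h9 h10 h11 h12
    hap hap1 ham ham1 hsum hx hy htan
  obtain ⟨ℓ₁, ℓ₂, hℓ⟩ := htang x y h1 h2 h3 h4
  have εxp : xp - x = αm * (xp - xm) := by linear_combination (-xp) * hsum - hx
  have εxm : xm - x = -αp * (xp - xm) := by linear_combination (-xm) * hsum - hx
  have εyp : yp - y = αm * (yp - ym) := by linear_combination (-yp) * hsum - hy
  have εym : ym - y = -αp * (yp - ym) := by linear_combination (-ym) * hsum - hy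
  have hp := hℓ xp yp h5 h6 h7 h8 (by rw [εyp, εxp]; linear_combination αm * htan)
  have hm := hℓ xm ym h9 h10 h11 h12 (by rw [εym, εxm]; linear_combination (-αp) * htan)
  rw [εxp, εyp] at hp
  rw [εxm, εym] at hm
  have h1' := mul_le_mul_of_nonneg_left hp hap.le
  have h2' := mul_le_mul_of_nonneg_left hm ham.le
  calc αp * R xp yp + αm * R xm ym
      ≤ αp * (R x y + ℓ₁ * (αm * (xp - xm)) + ℓ₂ * (αm * (yp - ym)))
        + αm * (R x y + ℓ₁ * (-αp * (xp - xm)) + ℓ₂ * (-αp * (yp - ym))) := by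
        linarith
    _ = R x y := by linear_combination (R x y) * hsum
end

section
/- For all real numbers α, γ with 0 ≤ α ≤ γ < π/2, the inequality e^{1 + (sin α − cos α − sin γ)/cos γ} + (cos α + sin γ)·e^{−α} ≤ 2 holds. (Equivalently, the function F(α) = e^{1 + (sin α − cos α − sin γ)/cos γ} − 2 + cos α·e^{−α} + sin γ·e^{−α} is nonpositive on [0, γ].) -/
private lemma W2exp_nonneg (q s c : ℝ) (hc : 0 < c) (hcq : c ≤ q) (hs0 : 0 ≤ s)
    (hs1 : s ≤ 1) (e2 : s^2 + c^2 = 1) :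
    0 ≤ c^2*(2*s-1) + q*c^2*(1+s) + q^2*s*(2-s) + q^3*(1+s) + q^4
      + 2*q*c*(q*(1+s) + 2*s - (1-q^2)) := by
  have hq0 : 0 < q := lt_of_lt_of_le hc hcq
  have hqc2 : 0 ≤ q^2 - c^2 := by nlinarith [mul_nonneg (sub_nonneg.2 hcq) (by linarith : (0:ℝ) ≤ q + c)]
  have h1 : 0 ≤ c^2*(q-c) := mul_nonneg (by positivity) (by linarith)
  have h2 : 0 ≤ c^2*(q^2-c^2) := mul_nonneg (by positivity) hqc2
  have h3 : 0 ≤ c^2*(c + 2*s - 1 + c^2) := by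
    have hx : c + 2*s - 1 + c^2 = c + s*(2-s) := by linear_combination e2
    rw [hx]
    exact mul_nonneg (by positivity) (by nlinarith [mul_nonneg hs0 (by linarith : (0:ℝ) ≤ 2 - s)])
  have h4 : 0 ≤ q*(q^2-c^2) := mul_nonneg hq0.le hqc2
  have h5 : 0 ≤ q^2*(q^2-c^2) := mul_nonneg (by positivity) hqc2
  have h6 : 0 ≤ 2*q*c*(s^2 - 1 + q^2) := by
    have hx : s^2 - 1 + q^2 = q^2 - c^2 := by linear_combination e2
    rw [hx]; exact mul_nonneg (by positivity) hqc2
  have h7 : 0 ≤ 2*q*c*s*(2-s) := by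
    have : (0:ℝ) ≤ 2 - s := by linarith
    positivity
  have h8 : 0 ≤ q*c^2 := by positivity
  have t9 : 0 ≤ q*c^2*s := by positivity
  have t10 : 0 ≤ q^3*s := by positivity
  have t11 : 0 ≤ q^2*s*(2-s) := by
    have : (0:ℝ) ≤ 2 - s := by linarith
    positivity
  have t12 : 0 ≤ 2*q^2*c*(1+s) := by
    have : (0:ℝ) ≤ 1 + s := by linarith
    positivity
  linarith [h1, h2, h3, h4, h5, h6, h7, h8, t9, t10, t11, t12]

set_option maxHeartbeats 2000000 in
private lemma key_poly (p q s c : ℝ) (hp0 : 0 ≤ p) (hps : p ≤ s) (hc : 0 < c)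
    (hcq : c ≤ q) (hq1 : q ≤ 1) (hs1 : s ≤ 1)
    (e1 : p^2 + q^2 = 1) (e2 : s^2 + c^2 = 1) :
    c^2 ≤ (1 - s + p) * (c^2 + c*((s-p)+(q-c)) + ((s-p)+(q-c))^2/2) := by
  have hq0 : 0 < q := lt_of_lt_of_le hc hcq
  have hs0 : 0 ≤ s := le_trans hp0 hps
  have hp1 : p ≤ 1 := by nlinarith [sq_nonneg (p-1), sq_nonneg q]
  have hW2exp := W2exp_nonneg q s c hc hcq hs0 hs1 e2
  have hW2 : 0 ≤ (1+q)*(2*c+2*s-s^3+2*q+2*q*s*c-q*s^2) - (1-s)*(q+c)^2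
      - (1-q)*(1+q)^2*(2*c+s+q) := by
    have heq : (1+q)*(2*c+2*s-s^3+2*q+2*q*s*c-q*s^2) - (1-s)*(q+c)^2
        - (1-q)*(1+q)^2*(2*c+s+q)
        = c^2*(2*s-1) + q*c^2*(1+s) + q^2*s*(2-s) + q^3*(1+s) + q^4
          + 2*q*c*(q*(1+s) + 2*s - (1-q^2)) := by
      linear_combination ((-1:ℝ)*s + (-1:ℝ)*q + (-1:ℝ)*q*s) * e2
    rw [heq]; exact hW2exp
  have hW : 0 ≤ (1+q)*(2*c+2*s-s^3+2*q+2*q*s*c-q*s^2) - p*((1-s)*(q+c)^2)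
      - p^2*((1+q)*(2*c+s+q)) := by
    have heqW : (1+q)*(2*c+2*s-s^3+2*q+2*q*s*c-q*s^2) - p*((1-s)*(q+c)^2)
        - p^2*((1+q)*(2*c+s+q))
        = ((1+q)*(2*c+2*s-s^3+2*q+2*q*s*c-q*s^2) - (1-s)*(q+c)^2
          - (1-q)*(1+q)^2*(2*c+s+q)) + (1-p)*((1-s)*(q+c)^2) := by
      linear_combination (-(1+q)*(2*c+s+q)) * e1
    rw [heqW]
    have : 0 ≤ (1-p)*((1-s)*(q+c)^2) := by
      apply mul_nonneg (by linarith)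
      exact mul_nonneg (by linarith) (sq_nonneg _)
    linarith
  have hiden : (1+q)*(q+c)^2*((1 - s + p) * (c^2 + c*((s-p)+(q-c)) + ((s-p)+(q-c))^2/2) - c^2)
      = (s-p)*p*((1+q)*(2*c+2*s-s^3+2*q+2*q*s*c-q*s^2) - p*((1-s)*(q+c)^2)
        - p^2*((1+q)*(2*c+s+q))) := by
    linear_combination ((1/2:ℝ) + c - (1:ℝ)*c*c*c + (1/2:ℝ)*s + s*c - (1:ℝ)*s*c*c*c - (1/2:ℝ)*s*s - (1:ℝ)*s*s*c - (1:ℝ)*s*s*c*c - (1/2:ℝ)*s*s*s - (1:ℝ)*s*s*s*c + (1/2:ℝ)*q + q*c + (1/2:ℝ)*q*s + q*s*c - (1:ℝ)*q*s*c*c - (1/2:ℝ)*q*s*s - (2:ℝ)*q*s*s*c - (1/2:ℝ)*q*s*s*s + (1/2:ℝ)*q*q + q*q*c + (1/2:ℝ)*q*q*s - (1:ℝ)*q*q*s*c - (1:ℝ)*q*q*s*s + (1/2:ℝ)*q*q*q - (1/2:ℝ)*q*q*q*s - (1/2:ℝ)*p - (1:ℝ)*p*c + p*c*c*c - (1:ℝ)*p*s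 + (2:ℝ)*p*s*c + (2:ℝ)*p*s*c*c + (3/2:ℝ)*p*s*s + p*s*s*c + p*s*s*s - (1/2:ℝ)*p*q - (1:ℝ)*p*q*c + p*q*c*c + p*q*s + (4:ℝ)*p*q*s*c + (3/2:ℝ)*p*q*s*s - (1/2:ℝ)*p*q*q + p*q*q*c + (2:ℝ)*p*q*q*s + (1/2:ℝ)*p*q*q*q + p*p - (2:ℝ)*p*p*c - (1:ℝ)*p*p*c*c - (1:ℝ)*p*p*s - (1:ℝ)*p*p*s*s - (1:ℝ)*p*p*q - (2:ℝ)*p*p*q*c - (1:ℝ)*p*p*q*s - (1:ℝ)*p*p*q*q) * e1 + ((- 1/2:ℝ) - (1:ℝ)*c - (1/2:ℝ)*c*c - (1/2:ℝ)*s - (1:ℝ)*s*c - (1/2:ℝ)*s*c*c - (1/2:ℝ)*q - (1:ℝ)*q*c - (1/2:ℝ)*q*c*c - (1/2:ℝ)*q*s - (1:ℝ)*q*s*c - (1/2:ℝ)*q*s*c*c + (1/2:ℝ)*p + p*c + (1/2:ℝ)*p*c*c + p*s + p*s*s + (1/2:ℝ)*p*q + p*q*c + (1/2:ℝ)*p*q*c*c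 + p*q*s + p*q*s*s - (1/2:ℝ)*p*p + p*p*c - (1/2:ℝ)*p*p*s + p*p*s*c - (1/2:ℝ)*p*p*q - (1/2:ℝ)*p*p*q*s - (1/2:ℝ)*p*p*p - (1:ℝ)*p*p*p*c - (1:ℝ)*p*p*p*s - (1/2:ℝ)*p*p*p*q + p*p*p*p) * e2
  have hWnn : 0 ≤ (s-p)*p*((1+q)*(2*c+2*s-s^3+2*q+2*q*s*c-q*s^2) - p*((1-s)*(q+c)^2)
      - p^2*((1+q)*(2*c+s+q))) :=
    mul_nonneg (mul_nonneg (by linarith) hp0) hW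
  have hpos : 0 < (1+q)*(q+c)^2 := by positivity
  rw [← hiden] at hWnn
  have hX := (mul_nonneg_iff_of_pos_left hpos).mp hWnn
  linarith

/-- For real `0 ≤ α ≤ γ < π/2`,
`e^{1 + (sin α − cos α − sin γ)/cos γ} + (cos α + sin γ)·e^{−α} ≤ 2`. -/
theorem exp_trig_inequality (α γ : ℝ) (h0 : 0 ≤ α) (h1 : α ≤ γ) (h2 : γ < Real.pi / 2) :
    Real.exp (1 + (Real.sin α - Real.cos α - Real.sin γ) / Real.cos γ) +
      (Real.cos α + Real.sin γ) * Real.exp (-α) ≤ 2 := by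
  have hπ := Real.pi_pos
  have hc : 0 < Real.cos γ :=
    Real.cos_pos_of_mem_Ioo ⟨by linarith, h2⟩
  have hcq : Real.cos γ ≤ Real.cos α :=
    Real.cos_le_cos_of_nonneg_of_le_pi h0 (by linarith) h1
  have hps : Real.sin α ≤ Real.sin γ :=
    Real.sin_le_sin_of_le_of_le_pi_div_two (by linarith) h2.le h1
  have hp0 : 0 ≤ Real.sin α := Real.sin_nonneg_of_nonneg_of_le_pi h0 (by linarith)
  have hq1 : Real.cos α ≤ 1 := Real.cos_le_one α
  have hs1 : Real.sin γ < 1 := by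
    have h := Real.sin_lt_sin_of_lt_of_le_pi_div_two
      (show -(Real.pi/2) ≤ γ by linarith) (le_refl (Real.pi/2)) h2
    simpa using h
  have e1 : Real.sin α^2 + Real.cos α^2 = 1 := Real.sin_sq_add_cos_sq α
  have e2 : Real.sin γ^2 + Real.cos γ^2 = 1 := Real.sin_sq_add_cos_sq γ
  -- Step B : (cos α + sin γ)·e^{−α} ≤ 1 + sin γ − sin α
  have hB : (Real.cos α + Real.sin γ) * Real.exp (-α) ≤ 1 + Real.sin γ - Real.sin α := by
    have hsa : Real.sin α ≤ α := Real.sin_le h0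
    have he : 1 + α ≤ Real.exp α := by linarith [Real.add_one_le_exp α]
    have h1sp : (0:ℝ) < 1 + Real.sin γ - Real.sin α := by linarith
    have h1' : Real.cos α + Real.sin γ ≤ (1 + Real.sin γ - Real.sin α) * (1 + α) := by
      nlinarith [mul_nonneg (sub_nonneg.2 hps) h0]
    have h2' : (1 + Real.sin γ - Real.sin α) * (1 + α)
        ≤ (1 + Real.sin γ - Real.sin α) * Real.exp α :=
      mul_le_mul_of_nonneg_left he h1sp.le
    have h3' : Real.cos α + Real.sin γ ≤ (1 + Real.sin γ - Real.sin α) * Real.exp α :=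
      h1'.trans h2'
    have hEpos : (0:ℝ) < Real.exp (-α) := Real.exp_pos _
    have h4' := mul_le_mul_of_nonneg_right h3' hEpos.le
    have h5' : (1 + Real.sin γ - Real.sin α) * Real.exp α * Real.exp (-α)
        = 1 + Real.sin γ - Real.sin α := by
      rw [mul_assoc, ← Real.exp_add]; simp
    linarith [h4', h5'.le]
  -- Step A : exp-term ≤ 1 − sin γ + sin α
  have hA : Real.exp (1 + (Real.sin α - Real.cos α - Real.sin γ) / Real.cos γ)
      ≤ 1 - Real.sin γ + Real.sin α := by
    set d : ℝ := (Real.sin γ - Real.sin α) + (Real.cos α - Real.cos γ) with hd_def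
    have hd0 : 0 ≤ d := by simp only [hd_def]; linarith
    have hxeq : 1 + (Real.sin α - Real.cos α - Real.sin γ) / Real.cos γ
        = -(d / Real.cos γ) := by
      field_simp [hd_def]
      ring
    rw [hxeq, Real.exp_neg]
    have hdc0 : 0 ≤ d / Real.cos γ := div_nonneg hd0 hc.le
    have hquad : 1 + d/Real.cos γ + (d/Real.cos γ)^2/2 ≤ Real.exp (d/Real.cos γ) :=
      Real.quadratic_le_exp_of_nonneg hdc0
    have hkey := key_poly (Real.sin α) (Real.cos α) (Real.sin γ) (Real.cos γ)
      hp0 hps hc hcq hq1 hs1.le e1 e2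
    have h1sp : (0:ℝ) < 1 - Real.sin γ + Real.sin α := by linarith
    have hone : 1 ≤ (1 - Real.sin γ + Real.sin α) * (1 + d/Real.cos γ + (d/Real.cos γ)^2/2) := by
      have hrw : (1 - Real.sin γ + Real.sin α) * (1 + d/Real.cos γ + (d/Real.cos γ)^2/2)
          = ((1 - Real.sin γ + Real.sin α) * (Real.cos γ^2 + Real.cos γ*d + d^2/2)) / Real.cos γ^2 := by
        field_simp
      rw [hrw, le_div_iff₀ (by positivity), one_mul]
      calc Real.cos γ^2
          ≤ (1 - Real.sin γ + Real.sin α) * (Real.cos γ^2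
            + Real.cos γ*((Real.sin γ - Real.sin α)+(Real.cos α - Real.cos γ))
            + ((Real.sin γ - Real.sin α)+(Real.cos α - Real.cos γ))^2/2) := hkey
        _ = (1 - Real.sin γ + Real.sin α) * (Real.cos γ^2 + Real.cos γ*d + d^2/2) := by
            rw [hd_def]
    have hE : 1 ≤ (1 - Real.sin γ + Real.sin α) * Real.exp (d/Real.cos γ) :=
      hone.trans (mul_le_mul_of_nonneg_left hquad h1sp.le)
    have hEpos : (0:ℝ) < Real.exp (d/Real.cos γ) := Real.exp_pos _
    have h6' := mul_le_mul_of_nonneg_left hE (inv_nonneg.2 hEpos.le)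
    have h7' : (Real.exp (d/Real.cos γ))⁻¹ * ((1 - Real.sin γ + Real.sin α) * Real.exp (d/Real.cos γ))
        = 1 - Real.sin γ + Real.sin α := by
      field_simp
    rw [mul_one, h7'] at h6'
    exact h6'
  linarith [hA, hB]
end
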